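/- arXiv:math/0503014 — 5 statements merged into one kernel-verified Lean document; each statement's English description precedes it below -/
import Mathlib

section
/- Generalized von Neumann theorem: Let k ≥ 2, let G be a finite additive (abelian) group with |G| = N satisfying gcd(N, (k−1)!) = 1, and let f₀, …, f_{k−1} : G → 𝒟 be functions. Then |Λ_k(f₀,…,f_{k−1})| ≤ min_{0 ≤ j ≤ k−1} ‖f_j‖_{U^{k−1}(G)}, where Λ_k(f₀,…,f_{k−1}) := 𝔼_{x,r∈G} f₀(x) f₁(x+r) ⋯ f_{k−1}(x+(k−1)r). -/
/-!
Write `x = u - ∑ₘ aₘ yₘ` and `r = ∑ₘ yₘ` in new variables `u, y₀, …, y_{k-2}`, where `aₘ` runs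
through the indices other than `j`. Then `x + i r = u + ∑ₘ (i - aₘ) yₘ`, so the factor `f_{aₘ}`
does not depend on `yₘ`. Applying Cauchy–Schwarz once in each variable `yₘ`, each time discarding
the bounded factor that does not depend on it, bounds `|Λ_k|^{2^{k-1}}` by the box average of
`(u, y) ↦ f_j (u + ∑ₘ (j - aₘ) yₘ)`. Since `0 < |j - aₘ| < k` is coprime to `N`, multiplication by
`j - aₘ` permutes `G`, and that box average is `‖f_j‖_{U^{k-1}}^{2^{k-1}}`.
-/

open Finset

/-- The Gowers uniformity norm `‖f‖_{U^d(G)}` of a function `f : G → ℂ` on a finite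
additive group `G`. -/
noncomputable def gowersNorm {G : Type*} [AddCommGroup G] [Fintype G] (d : ℕ) (f : G → ℂ) : ℝ :=
  norm
      (((Fintype.card G : ℂ) ^ (d + 1))⁻¹ *
        ∑ x : G, ∑ h : Fin d → G, ∏ ω : Fin d → Bool,
          (((starRingEnd ℂ) : ℂ → ℂ)^[(univ.filter fun i => ω i = true).card]
            (f (x + ∑ i ∈ univ.filter (fun i => ω i = true), h i)))) ^
    (((2 : ℝ) ^ d)⁻¹)

open Function
open scoped BigOperators

section Expect

variable {ι : Type*} [Fintype ι]

lemma norm_expect_mul_sq_le (A B : ι → ℂ) (hB : ∀ i, ‖B i‖ ≤ 1) :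
    ‖𝔼 i, A i * B i‖ ^ 2 ≤ ‖𝔼 i, A i * starRingEnd ℂ (A i)‖ := by
  have hA : 𝔼 i, A i * starRingEnd ℂ (A i) = ((𝔼 i, ‖A i‖ ^ 2 : ℝ) : ℂ) := by
    simp only [Complex.mul_conj', Complex.ofReal_expect, Complex.ofReal_pow]
  have hA₀ : 0 ≤ 𝔼 i, ‖A i‖ ^ 2 := expect_nonneg fun i _ => by positivity
  have hB₁ : 𝔼 i, ‖B i‖ ^ 2 ≤ 1 := by
    rcases isEmpty_or_nonempty ι with hι | hι
    · simp
    · exact expect_le univ_nonempty fun i _ => pow_le_one₀ (norm_nonneg _) (hB i)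
  rw [hA, Complex.norm_real, Real.norm_of_nonneg hA₀]
  calc ‖𝔼 i, A i * B i‖ ^ 2 ≤ (𝔼 i, ‖A i‖ * ‖B i‖) ^ 2 := by
        gcongr
        simpa only [norm_mul] using
          RCLike.norm_expect_le (K := ℂ) (s := univ) (f := fun i => A i * B i)
    _ ≤ (𝔼 i, ‖A i‖ ^ 2) * 𝔼 i, ‖B i‖ ^ 2 := expect_mul_sq_le_sq_mul_sq _ _ _
    _ ≤ 𝔼 i, ‖A i‖ ^ 2 := mul_le_of_le_one_right hA₀ hB₁

lemma expect_expect_eq_inv_card_sq_mul_sum_sum (P : ι → ι → ℂ) :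
    𝔼 x, 𝔼 r, P x r = ((Fintype.card ι : ℂ) ^ 2)⁻¹ * ∑ x, ∑ r, P x r := by
  simp only [Fintype.expect_eq_sum_div_card, ← sum_div]
  ring

lemma expect_mul_conj_expect {κ : Type*} [Fintype κ] (φ : κ → ℂ) :
    (𝔼 t, φ t) * starRingEnd ℂ (𝔼 t, φ t) = 𝔼 t, 𝔼 t', φ t * starRingEnd ℂ (φ t') := by
  rw [map_expect, Fintype.expect_mul_expect]

lemma expect_fin_cons {Y M : Type*} [Fintype Y] [AddCommMonoid M] [Module ℚ≥0 M] {n : ℕ}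
    (g : (Fin (n + 1) → Y) → M) :
    𝔼 y, g y = 𝔼 t, 𝔼 z, g (Fin.cons t z) := by
  rw [← Fintype.expect_equiv (Fin.consEquiv fun _ => Y) (fun p => g (Fin.cons p.1 p.2)) g
    fun p => rfl, ← univ_product_univ, expect_product]

end Expect

section Cube

variable {Y : Type*} {d : ℕ}

def cubeProd (g : (Fin d → Y) → ℂ) (y y' : Fin d → Y) : ℂ :=
  ∏ ω : Fin d → Bool,
    (starRingEnd ℂ)^[(univ.filter fun i => ω i = true).card] (g fun i => if ω i then y' i else y i)

lemma card_filter_fin_cons (b : Bool) (ω : Fin d → Bool) :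
    (univ.filter fun i => (Fin.cons b ω : Fin (d + 1) → Bool) i = true).card =
      (univ.filter fun i => ω i = true).card + if b then 1 else 0 := by
  simp only [card_filter, Fin.sum_univ_succ, Fin.cons_zero, Fin.cons_succ, add_comm]

lemma ite_fin_cons (b : Bool) (ω : Fin d → Bool) (t t' : Y) (z z' : Fin d → Y) :
    (fun i => if (Fin.cons b ω : Fin (d + 1) → Bool) i then
        (Fin.cons t' z' : Fin (d + 1) → Y) i else (Fin.cons t z : Fin (d + 1) → Y) i) =
      Fin.cons (if b then t' else t) fun i => if ω i then z' i else z i := by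
  ext i
  cases i using Fin.cases <;> simp

lemma cubeProd_cons (g : (Fin (d + 1) → Y) → ℂ) (t t' : Y) (z z' : Fin d → Y) :
    cubeProd g (Fin.cons t z) (Fin.cons t' z') =
      cubeProd (fun w => g (Fin.cons t w) * starRingEnd ℂ (g (Fin.cons t' w))) z z' := by
  unfold cubeProd
  rw [← Fintype.prod_equiv (Fin.consEquiv fun _ => Bool) (fun p => _) _ fun p => rfl,
    Fintype.prod_prod_type, Fintype.prod_bool, ← prod_mul_distrib]
  refine prod_congr rfl fun ω _ => ?_
  simp only [Fin.consEquiv_apply, card_filter_fin_cons, ite_fin_cons, ← RingHom.coe_pow, map_mul]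
  simp only [RingHom.coe_pow, if_true, if_false, Bool.false_eq_true, add_zero, iterate_succ_apply]
  exact mul_comm _ _

noncomputable def cubeAvg {X : Type*} [Fintype X] [Fintype Y] (H : X → (Fin d → Y) → ℂ) : ℂ :=
  𝔼 x, 𝔼 y, 𝔼 y', cubeProd (H x) y y'

variable {X : Type*}

noncomputable def consAvg [Fintype Y] (H : X → (Fin (d + 1) → Y) → ℂ) (p : X × (Fin d → Y)) : ℂ :=
  𝔼 t, H p.1 (Fin.cons t p.2)

def cubeDouble (H : X → (Fin (d + 1) → Y) → ℂ) (q : (X × Y) × Y) (z : Fin d → Y) : ℂ :=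
  H q.1.1 (Fin.cons q.1.2 z) * starRingEnd ℂ (H q.1.1 (Fin.cons q.2 z))

lemma cubeDouble_mul_prod (H : X → (Fin (d + 1) → Y) → ℂ) {ι : Type*} [Fintype ι]
    (F : ι → X → (Fin (d + 1) → Y) → ℂ) (q : (X × Y) × Y) (z : Fin d → Y) :
    cubeDouble (fun x y => H x y * ∏ m, F m x y) q z =
      cubeDouble H q z * ∏ m, cubeDouble (F m) q z := by
  simp only [cubeDouble, map_mul, map_prod, prod_mul_distrib]
  ring

variable [Fintype X] [Fintype Y]

lemma cubeAvg_succ (H : X → (Fin (d + 1) → Y) → ℂ) : cubeAvg H = cubeAvg (cubeDouble H) := by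
  simp only [cubeAvg, ← univ_product_univ, expect_product, expect_fin_cons, cubeProd_cons]
  exact expect_congr rfl fun x _ => expect_congr rfl fun t _ => expect_comm _ _ _

lemma expect_consAvg_mul_conj (H : X → (Fin (d + 1) → Y) → ℂ) :
    𝔼 p, consAvg H p * starRingEnd ℂ (consAvg H p) = 𝔼 q, 𝔼 z, cubeDouble H q z := by
  simp only [consAvg, cubeDouble, expect_mul_conj_expect, ← univ_product_univ, expect_product]
  refine expect_congr rfl fun x _ => ?_
  rw [expect_comm]
  exact expect_congr rfl fun t _ => expect_comm _ _ _

lemma expect_mul_prod_eq_expect_consAvg_mul [Nonempty Y] (H : X → (Fin (d + 1) → Y) → ℂ)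
    (F : Fin (d + 1) → X → (Fin (d + 1) → Y) → ℂ) (hF : ∀ x y t, F 0 x (update y 0 t) = F 0 x y) :
    𝔼 x, 𝔼 y, H x y * ∏ m, F m x y =
      𝔼 p, consAvg (fun x y => H x y * ∏ m : Fin d, F m.succ x y) p *
        F 0 p.1 (Fin.cons (Classical.arbitrary Y) p.2) := by
  simp only [consAvg, ← univ_product_univ, expect_product, expect_fin_cons, expect_mul]
  refine expect_congr rfl fun x _ => ?_
  rw [expect_comm]
  refine expect_congr rfl fun z _ => expect_congr rfl fun t _ => ?_
  rw [Fin.prod_univ_succ, ← hF x (Fin.cons t z) (Classical.arbitrary Y), Fin.update_cons_zero]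
  ring

end Cube

universe u

theorem norm_expect_mul_prod_pow_le_cubeAvg {X Y : Type u} [Fintype X] [Fintype Y] [Nonempty Y]
    {d : ℕ} (H : X → (Fin d → Y) → ℂ) (F : Fin d → X → (Fin d → Y) → ℂ)
    (hF : ∀ m x y, ‖F m x y‖ ≤ 1) (hFm : ∀ m x y t, F m x (update y m t) = F m x y) :
    ‖𝔼 x, 𝔼 y, H x y * ∏ m, F m x y‖ ^ 2 ^ d ≤ ‖cubeAvg H‖ := by
  induction d generalizing X with
  | zero => simp [cubeAvg, cubeProd]
  | succ d ih =>
    have hF' : ∀ (m : Fin d) q z, ‖cubeDouble (F m.succ) q z‖ ≤ 1 := fun m q z => by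
      simpa only [cubeDouble, norm_mul, Complex.norm_conj] using
        mul_le_one₀ (hF _ _ _) (norm_nonneg _) (hF _ _ _)
    have hF'm : ∀ (m : Fin d) q z t, cubeDouble (F m.succ) q (update z m t) =
        cubeDouble (F m.succ) q z := fun m q z t => by
      simp only [cubeDouble, Fin.cons_update, hFm]
    calc ‖𝔼 x, 𝔼 y, H x y * ∏ m, F m x y‖ ^ 2 ^ (d + 1)
        = (‖𝔼 p, consAvg (fun x y => H x y * ∏ m : Fin d, F m.succ x y) p *
            F 0 p.1 (Fin.cons (Classical.arbitrary Y) p.2)‖ ^ 2) ^ 2 ^ d := by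
          rw [expect_mul_prod_eq_expect_consAvg_mul H F (hFm 0), pow_succ', pow_mul]
      _ ≤ ‖𝔼 q, 𝔼 z, cubeDouble H q z * ∏ m, cubeDouble (F m.succ) q z‖ ^ 2 ^ d := by
          simp only [← cubeDouble_mul_prod, ← expect_consAvg_mul_conj]
          gcongr
          exact norm_expect_mul_sq_le _ _ fun p => hF _ _ _
      _ ≤ ‖cubeAvg (cubeDouble H)‖ := ih _ _ hF' hF'm
      _ = ‖cubeAvg H‖ := by rw [cubeAvg_succ]

section AddCommGroup

variable {G : Type*} [AddCommGroup G]

lemma zsmul_bijective_of_coprime {c : ℤ} (hc : (Nat.card G).Coprime c.natAbs) :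
    Bijective fun g : G => c • g := by
  rcases Int.natAbs_eq c with h | h <;> rw [h]
  · simpa only [natCast_zsmul] using hc.nsmul_right_bijective
  · simp only [neg_zsmul, natCast_zsmul]
    exact neg_bijective.comp hc.nsmul_right_bijective

lemma sub_sum_zsmul_add_nsmul_sum {n : ℕ} (a : Fin n → ℤ) (u : G) (y : Fin n → G) (i : ℕ) :
    u - ∑ m, a m • y m + i • ∑ m, y m = u + ∑ m, ((i : ℤ) - a m) • y m := by
  simp only [sub_smul, sum_sub_distrib, ← natCast_zsmul, smul_sum]
  abel

lemma sum_zsmul_update_of_eq_zero {n : ℕ} (c : Fin n → ℤ) (y : Fin n → G) {m : Fin n}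
    (hm : c m = 0) (t : G) : ∑ m', c m' • update y m t m' = ∑ m', c m' • y m' := by
  refine sum_congr rfl fun m' _ => ?_
  rcases eq_or_ne m' m with rfl | h
  · simp [hm]
  · rw [update_of_ne h]

lemma sum_zsmul_ite_eq {n : ℕ} (c : Fin n → ℤ) (ω : Fin n → Bool) (y y' : Fin n → G) :
    ∑ m, c m • (if ω m then y' m else y m) =
      ∑ m, c m • y m + ∑ m ∈ univ.filter fun m => ω m = true, c m • (y' m - y m) := by
  rw [sum_filter, ← sum_add_distrib]
  refine sum_congr rfl fun m _ => ?_
  split_ifs <;> simp [smul_sub]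

variable [Fintype G] {M : Type*} [AddCommMonoid M] [Module ℚ≥0 M]

lemma expect_add_right (s : G) (φ : G → M) : 𝔼 u, φ (u + s) = 𝔼 u, φ u :=
  Fintype.expect_equiv (Equiv.addRight s) _ _ fun _ => rfl

lemma expect_fin_sum {n : ℕ} (φ : G → M) : 𝔼 y : Fin (n + 1) → G, φ (∑ m, y m) = 𝔼 r, φ r := by
  rw [expect_fin_cons, expect_comm]
  simp only [Fin.sum_cons, expect_add_right, Fintype.expect_const]

lemma expect_expect_eq_expect_sub_sum {n : ℕ} (a : Fin (n + 1) → ℤ) (P : G → G → M) :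
    𝔼 x, 𝔼 r, P x r = 𝔼 u, 𝔼 y : Fin (n + 1) → G, P (u - ∑ m, a m • y m) (∑ m, y m) := by
  calc 𝔼 x, 𝔼 r, P x r = 𝔼 x, 𝔼 y : Fin (n + 1) → G, P x (∑ m, y m) :=
        expect_congr rfl fun x _ => (expect_fin_sum (P x)).symm
    _ = 𝔼 y : Fin (n + 1) → G, 𝔼 u, P (u - ∑ m, a m • y m) (∑ m, y m) := by
        rw [expect_comm]
        refine expect_congr rfl fun y _ => ?_
        simpa only [sub_eq_add_neg] using (expect_add_right _ fun u => P u (∑ m, y m)).symm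
    _ = _ := expect_comm _ _ _

end AddCommGroup

section Gowers

variable {G : Type*} [AddCommGroup G] [Fintype G]

noncomputable def gowersCubeAvg (d : ℕ) (f : G → ℂ) : ℂ :=
  𝔼 x, 𝔼 h : Fin d → G, ∏ ω : Fin d → Bool,
    (starRingEnd ℂ)^[(univ.filter fun i => ω i = true).card]
      (f (x + ∑ i ∈ univ.filter (fun i => ω i = true), h i))

lemma gowersNorm_eq (d : ℕ) (f : G → ℂ) :
    gowersNorm d f = ‖gowersCubeAvg d f‖ ^ ((2 : ℝ) ^ d)⁻¹ := by
  rw [gowersNorm, gowersCubeAvg]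
  congr 2
  simp only [Fintype.expect_eq_sum_div_card, ← sum_div, Fintype.card_fun, Fintype.card_fin]
  push_cast
  ring

lemma cubeAvg_comp_linear {d : ℕ} (f : G → ℂ) (c : Fin d → ℤ)
    (hc : ∀ m, Bijective fun x : G => c m • x) :
    cubeAvg (fun u (y : Fin d → G) => f (u + ∑ m, c m • y m)) = gowersCubeAvg d f := by
  let Φ : G → (Fin d → G) → ℂ := fun x h => ∏ ω : Fin d → Bool,
    (starRingEnd ℂ)^[(univ.filter fun i => ω i = true).card]
      (f (x + ∑ i ∈ univ.filter (fun i => ω i = true), h i))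
  let e : (Fin d → G) → (Fin d → G) → Fin d → G := fun y y' m => c m • (y' m - y m)
  have he : ∀ y, Bijective (e y) := fun y =>
    (Bijective.piMap hc).comp (Equiv.subRight y).bijective
  have hcube : ∀ u y y', cubeProd (fun y => f (u + ∑ m, c m • y m)) y y' =
      Φ (u + ∑ m, c m • y m) (e y y') := by
    intro u y y'
    simp only [cubeProd, Φ, e, sum_zsmul_ite_eq, add_assoc]
  simp only [cubeAvg, hcube]
  rw [expect_comm]
  calc 𝔼 y, 𝔼 u, 𝔼 y', Φ (u + ∑ m, c m • y m) (e y y') = 𝔼 _y : Fin d → G, 𝔼 x, 𝔼 h, Φ x h :=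
        expect_congr rfl fun y _ => by
          rw [expect_add_right (∑ m, c m • y m) fun x => 𝔼 y', Φ x (e y y')]
          exact expect_congr rfl fun x _ => Fintype.expect_bijective _ (he y) _ _ fun _ => rfl
    _ = gowersCubeAvg d f := Fintype.expect_const _

end Gowers

/-- **Generalized von Neumann theorem**: if `k ≥ 2`, `G` is a finite abelian group with
`gcd(|G|, (k-1)!) = 1` and `f₀, …, f_{k-1} : G → 𝒟`, then
`|Λ_k(f₀,…,f_{k-1})| ≤ min_j ‖f_j‖_{U^{k-1}(G)}`. -/
theorem generalized_von_neumann {G : Type*} [AddCommGroup G] [Fintype G]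
    (k : ℕ) (hk : 2 ≤ k)
    (hN : Nat.gcd (Fintype.card G) (Nat.factorial (k - 1)) = 1)
    (f : Fin k → G → ℂ) (hf : ∀ j x, norm (f j x) ≤ 1) (j : Fin k) :
    norm (((Fintype.card G : ℂ) ^ 2)⁻¹ *
        ∑ x : G, ∑ r : G, ∏ i : Fin k, f i (x + (i : ℕ) • r)) ≤
      gowersNorm (k - 1) (f j) := by
  obtain ⟨d, rfl⟩ : ∃ d, k = d + 2 := ⟨k - 2, by omega⟩
  let a : Fin (d + 1) → ℤ := fun m => (j.succAbove m : ℕ)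
  have hc : ∀ m, Bijective fun x : G => ((j : ℤ) - a m) • x := fun m => by
    have ha : a m = (j.succAbove m : ℕ) := rfl
    have hne := Fin.val_ne_of_ne (j.succAbove_ne m)
    have hlt := (j.succAbove m).is_lt
    have hj := j.is_lt
    refine zsmul_bijective_of_coprime <| Nat.Coprime.coprime_dvd_right ?_ <|
      Nat.card_eq_fintype_card (α := G) ▸ hN
    exact Nat.dvd_factorial (by omega) (by omega)
  have key := norm_expect_mul_prod_pow_le_cubeAvg
    (fun u y => f j (u + ∑ m, ((j : ℤ) - a m) • y m))
    (fun m u y => f (j.succAbove m) (u + ∑ m', (a m - a m') • y m')) (fun _ _ _ => hf _ _)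
    fun m u y t => by rw [sum_zsmul_update_of_eq_zero _ _ (sub_self _)]
  rw [cubeAvg_comp_linear _ _ hc] at key
  rw [← expect_expect_eq_inv_card_sq_mul_sum_sum, expect_expect_eq_expect_sub_sum a, gowersNorm_eq,
    Real.le_rpow_inv_iff_of_pos (norm_nonneg _) (norm_nonneg _) (by positivity)]
  simp only [sub_sum_zsmul_add_nsmul_sum, Fin.prod_univ_succAbove _ j]
  exact_mod_cast key
end

section
/- Inverse theorem for the U²(G) norm: Let G be a finite additive (abelian) group and let f : G → 𝒟 be a bounded function. Then sup_{ξ∈Ĝ} |f̂(ξ)| ≤ ‖f‖_{U²(G)} ≤ (sup_{ξ∈Ĝ} |f̂(ξ)|)^{1/2}, where f̂(ξ) := 𝔼_{x∈G} f(x) e(−ξ·x). -/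
open Finset

/-- The exponential map `e : ℝ/ℤ → ℂ`, `e(θ) = e^{2πiθ}`. -/
noncomputable def ee (θ : AddCircle (1 : ℝ)) : ℂ := (AddCircle.toCircle θ : ℂ)

/-- The Fourier coefficient `f̂(ξ) = 𝔼_{x ∈ G} f(x) e(-ξ·x)`, where the frequency `ξ` is an
element of the dual group, i.e. a homomorphism `G → ℝ/ℤ`. -/
noncomputable def fourierCoef {G : Type*} [AddCommGroup G] [Fintype G]
    (f : G → ℂ) (ξ : G →+ AddCircle (1 : ℝ)) : ℂ :=
  (Fintype.card G : ℂ)⁻¹ * ∑ x : G, f x * ee (-(ξ x))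

/-!
Characters of `G` are exactly the maps `x ↦ e(ξ·x)`, so the supremum ranges over all characters.
Reindexing the cube gives `‖f‖_{U²}⁴ = 𝔼_s |(f ∗ f)(s)|²` for the normalized self-convolution, whose
Fourier coefficients are the `f̂(ψ)²`; Parseval then gives `‖f‖_{U²}⁴ = ∑_ψ |f̂(ψ)|⁴`. A single term
bounds the sum from below, and `∑_ψ |f̂(ψ)|⁴ ≤ (sup_ψ |f̂(ψ)|)² ∑_ψ |f̂(ψ)|² ≤ (sup_ψ |f̂(ψ)|)²` by
Parseval again and `|f| ≤ 1`.
-/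

open ComplexConjugate

lemma sum_pow_four_le_sq_mul_sum_sq {ι : Type*} (s : Finset ι) (a : ι → ℝ) {M : ℝ}
    (hM : ∀ i ∈ s, |a i| ≤ M) : ∑ i ∈ s, a i ^ 4 ≤ M ^ 2 * ∑ i ∈ s, a i ^ 2 := by
  rw [mul_sum]
  refine sum_le_sum fun i hi ↦ ?_
  have : a i ^ 2 ≤ M ^ 2 := sq_le_sq' (abs_le.1 (hM i hi)).1 (abs_le.1 (hM i hi)).2
  nlinarith [sq_nonneg (a i)]

section

variable {G : Type*} [AddCommGroup G]

noncomputable def dualAddChar (ξ : G →+ AddCircle (1 : ℝ)) : AddChar G ℂ :=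
  (Circle.coeHom.compAddChar AddCircle.toCircle_addChar).compAddMonoidHom ξ

lemma dualAddChar_apply (ξ : G →+ AddCircle (1 : ℝ)) (x : G) : dualAddChar ξ x = ee (ξ x) :=
  rfl

lemma dualAddChar_surjective [Finite G] : Function.Surjective (dualAddChar (G := G)) := by
  intro ψ
  set χ := AddChar.circleEquivComplex.symm ψ
  set e := AddCircle.homeomorphCircle (one_ne_zero : (1 : ℝ) ≠ 0)
  have toCircle_symm (z : Circle) : AddCircle.toCircle (e.symm z) = z := by
    rw [← AddCircle.homeomorphCircle_apply one_ne_zero, e.apply_symm_apply]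
  have hinj := AddCircle.injective_toCircle (one_ne_zero : (1 : ℝ) ≠ 0)
  refine ⟨AddMonoidHom.mk' (fun x ↦ e.symm (χ x)) fun x y ↦ hinj ?_, ?_⟩
  · rw [AddCircle.toCircle_add, toCircle_symm, toCircle_symm, toCircle_symm, AddChar.map_add_eq_mul]
  · ext x
    simp only [dualAddChar_apply, ee, AddMonoidHom.mk'_apply, toCircle_symm]
    rfl

lemma prod_gowersCube_two (f : G → ℂ) (x : G) (h : Fin 2 → G) :
    ∏ ω : Fin 2 → Bool, (⇑(starRingEnd ℂ))^[(univ.filter fun i ↦ ω i = true).card]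
        (f (x + ∑ i ∈ univ.filter (fun i ↦ ω i = true), h i)) =
      f x * conj (f (x + h 0)) * conj (f (x + h 1)) * f (x + h 0 + h 1) := by
  rw [← (finTwoArrowEquiv Bool).symm.prod_comp, Fintype.prod_prod_type]
  simp [Fin.univ_succ, filter_insert, filter_singleton, add_assoc, mul_comm, mul_left_comm]

variable [Fintype G]

noncomputable def charCoef (f : G → ℂ) (ψ : AddChar G ℂ) : ℂ :=
  (Fintype.card G : ℂ)⁻¹ * ∑ x, f x * ψ (-x)

lemma fourierCoef_eq_charCoef (f : G → ℂ) (ξ : G →+ AddCircle (1 : ℝ)) :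
    fourierCoef f ξ = charCoef f (dualAddChar ξ) := by
  simp only [fourierCoef, charCoef, dualAddChar_apply, map_neg]

noncomputable def addConv (f g : G → ℂ) (s : G) : ℂ := ∑ a, f a * g (s - a)

lemma conj_charCoef (f : G → ℂ) (ψ : AddChar G ℂ) :
    conj (charCoef f ψ) = (Fintype.card G : ℂ)⁻¹ * ∑ x, conj (f x) * ψ x := by
  simp only [charCoef, map_mul, map_inv₀, map_natCast, map_sum, ← AddChar.map_neg_eq_conj, neg_neg]

lemma sum_norm_charCoef_sq (f : G → ℂ) :
    ∑ ψ : AddChar G ℂ, ‖charCoef f ψ‖ ^ 2 = (Fintype.card G : ℝ)⁻¹ * ∑ x, ‖f x‖ ^ 2 := by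
  classical
  apply Complex.ofReal_injective
  push_cast
  simp only [← Complex.mul_conj']
  have hN : (Fintype.card G : ℂ) ≠ 0 := Nat.cast_ne_zero.2 Fintype.card_ne_zero
  have expand (ψ : AddChar G ℂ) : charCoef f ψ * conj (charCoef f ψ) =
      (Fintype.card G : ℂ)⁻¹ ^ 2 * ∑ a, ∑ b, f a * conj (f b) * ψ (b - a) := by
    rw [conj_charCoef, charCoef, mul_mul_mul_comm, sum_mul_sum, sq]
    congr 1
    refine sum_congr rfl fun a _ ↦ sum_congr rfl fun b _ ↦ ?_
    rw [sub_eq_neg_add, AddChar.map_add_eq_mul]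
    ring
  calc ∑ ψ : AddChar G ℂ, charCoef f ψ * conj (charCoef f ψ)
      = (Fintype.card G : ℂ)⁻¹ ^ 2 * ∑ a, ∑ b, f a * conj (f b) * ∑ ψ : AddChar G ℂ, ψ (b - a) := by
        simp only [expand, ← mul_sum]
        rw [sum_comm]
        refine congrArg _ (sum_congr rfl fun a _ ↦ ?_)
        rw [sum_comm]
        simp only [mul_sum]
    _ = (Fintype.card G : ℂ)⁻¹ * ∑ x, f x * conj (f x) := by
        simp only [AddChar.sum_apply_eq_ite, sub_eq_zero, mul_ite, mul_zero, sum_ite_eq',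
          mem_univ, if_true, ← sum_mul]
        field_simp

lemma charCoef_mul_charCoef (f g : G → ℂ) (ψ : AddChar G ℂ) :
    charCoef f ψ * charCoef g ψ = (Fintype.card G : ℂ)⁻¹ * charCoef (addConv f g) ψ := by
  rw [charCoef, charCoef, charCoef, mul_mul_mul_comm, sum_mul_sum, mul_assoc]
  simp only [addConv, sum_mul]
  congr 2
  refine Eq.trans ?_ sum_comm
  refine sum_congr rfl fun a _ ↦ ?_
  rw [← (Equiv.subRight a).sum_comp (fun c ↦ f a * ψ (-a) * (g c * ψ (-c)))]
  refine sum_congr rfl fun s _ ↦ ?_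
  rw [Equiv.subRight_apply, mul_mul_mul_comm, ← AddChar.map_add_eq_mul]
  congr 2
  abel

lemma sum_norm_charCoef_pow_four (f : G → ℂ) :
    ∑ ψ : AddChar G ℂ, ‖charCoef f ψ‖ ^ 4 =
      ((Fintype.card G : ℝ) ^ 3)⁻¹ * ∑ s, ‖addConv f f s‖ ^ 2 := by
  calc ∑ ψ : AddChar G ℂ, ‖charCoef f ψ‖ ^ 4
      = ∑ ψ : AddChar G ℂ, ‖charCoef f ψ * charCoef f ψ‖ ^ 2 := by
        refine sum_congr rfl fun ψ _ ↦ ?_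
        rw [norm_mul]
        ring
    _ = (Fintype.card G : ℝ)⁻¹ ^ 2 * ∑ ψ : AddChar G ℂ, ‖charCoef (addConv f f) ψ‖ ^ 2 := by
        simp only [charCoef_mul_charCoef, norm_mul, norm_inv, norm_natCast, mul_pow, mul_sum]
    _ = ((Fintype.card G : ℝ) ^ 3)⁻¹ * ∑ s, ‖addConv f f s‖ ^ 2 := by
        rw [sum_norm_charCoef_sq]
        ring

lemma sum_prod_gowersCube_two_eq_sum_norm_addConv_sq (f : G → ℂ) :
    ∑ x, ∑ h : Fin 2 → G, ∏ ω : Fin 2 → Bool,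
        (⇑(starRingEnd ℂ))^[(univ.filter fun i ↦ ω i = true).card]
          (f (x + ∑ i ∈ univ.filter (fun i ↦ ω i = true), h i)) =
      ∑ s, (‖addConv f f s‖ ^ 2 : ℂ) := by
  calc _ = ∑ x, ∑ h₀, ∑ h₁, f x * conj (f (x + h₀)) * conj (f (x + h₁)) * f (x + h₀ + h₁) := by
        refine sum_congr rfl fun x _ ↦ ?_
        rw [← (finTwoArrowEquiv G).symm.sum_comp, Fintype.sum_prod_type]
        simp only [prod_gowersCube_two, finTwoArrowEquiv_symm_apply, Matrix.cons_val_zero,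
          Matrix.cons_val_one, Matrix.cons_val_fin_one]
    _ = ∑ a, ∑ b, ∑ t, f a * conj (f b) * conj (f (a + t - b)) * f t := by
        refine sum_congr rfl fun a _ ↦ ?_
        refine Fintype.sum_equiv (Equiv.addLeft a) _ _ fun h₀ ↦ ?_
        refine Fintype.sum_equiv (Equiv.addLeft (a + h₀)) _ _ fun h₁ ↦ ?_
        simp only [Equiv.coe_addLeft]
        rw [add_sub_add_left_eq_sub, add_sub_right_comm, add_sub_cancel_right]
    _ = ∑ a, ∑ b, ∑ s, f a * f (s - a) * (conj (f b) * conj (f (s - b))) := by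
        refine sum_congr rfl fun a _ ↦ sum_congr rfl fun b _ ↦ ?_
        refine Fintype.sum_equiv (Equiv.addRight a) _ _ fun t ↦ ?_
        simp only [Equiv.coe_addRight]
        rw [add_sub_cancel_right, add_comm t]
        ring
    _ = ∑ s, ∑ a, ∑ b, f a * f (s - a) * (conj (f b) * conj (f (s - b))) :=
        (sum_congr rfl fun a _ ↦ sum_comm).trans sum_comm
    _ = ∑ s, (‖addConv f f s‖ ^ 2 : ℂ) := by
        simp only [← Complex.mul_conj', addConv, map_sum, map_mul, sum_mul_sum]

lemma gowersNorm_two_eq (f : G → ℂ) :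
    gowersNorm 2 f = (∑ ψ : AddChar G ℂ, ‖charCoef f ψ‖ ^ 4) ^ (4 : ℝ)⁻¹ := by
  have hsum : (0 : ℝ) ≤ ((Fintype.card G : ℝ) ^ 3)⁻¹ * ∑ s, ‖addConv f f s‖ ^ 2 := by positivity
  rw [gowersNorm, sum_prod_gowersCube_two_eq_sum_norm_addConv_sq, sum_norm_charCoef_pow_four,
    ← Complex.norm_of_nonneg hsum]
  norm_num

lemma norm_charCoef_le_gowersNorm (f : G → ℂ) (ψ : AddChar G ℂ) :
    ‖charCoef f ψ‖ ≤ gowersNorm 2 f := by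
  rw [gowersNorm_two_eq]
  calc ‖charCoef f ψ‖ = (‖charCoef f ψ‖ ^ 4) ^ (4 : ℝ)⁻¹ := by
        rw [← Real.rpow_natCast, ← Real.rpow_mul (norm_nonneg _)]
        norm_num
    _ ≤ (∑ ψ : AddChar G ℂ, ‖charCoef f ψ‖ ^ 4) ^ (4 : ℝ)⁻¹ := by
        gcongr
        exact single_le_sum (f := fun ψ ↦ ‖charCoef f ψ‖ ^ 4) (fun _ _ ↦ by positivity) (mem_univ ψ)

lemma sum_norm_charCoef_sq_le_one {f : G → ℂ} (hf : ∀ x, ‖f x‖ ≤ 1) :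
    ∑ ψ : AddChar G ℂ, ‖charCoef f ψ‖ ^ 2 ≤ 1 := by
  have hN : (0 : ℝ) < Fintype.card G := Nat.cast_pos.2 Fintype.card_pos
  rw [sum_norm_charCoef_sq, inv_mul_le_one₀ hN]
  calc ∑ x, ‖f x‖ ^ 2 ≤ ∑ _x : G, (1 : ℝ) :=
        sum_le_sum fun x _ ↦ pow_le_one₀ (norm_nonneg _) (hf x)
    _ = Fintype.card G := by simp

lemma gowersNorm_two_le_rpow_of_forall_norm_charCoef_le {f : G → ℂ} (hf : ∀ x, ‖f x‖ ≤ 1)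
    {M : ℝ} (hM : ∀ ψ, ‖charCoef f ψ‖ ≤ M) : gowersNorm 2 f ≤ M ^ ((1 : ℝ) / 2) := by
  have hM0 : 0 ≤ M := (norm_nonneg _).trans (hM 0)
  have hfourth : ∑ ψ : AddChar G ℂ, ‖charCoef f ψ‖ ^ 4 ≤ M ^ 2 :=
    calc ∑ ψ : AddChar G ℂ, ‖charCoef f ψ‖ ^ 4
        ≤ M ^ 2 * ∑ ψ : AddChar G ℂ, ‖charCoef f ψ‖ ^ 2 :=
          sum_pow_four_le_sq_mul_sum_sq _ _ fun ψ _ ↦ (abs_norm _).trans_le (hM ψ)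
      _ ≤ M ^ 2 := mul_le_of_le_one_right (sq_nonneg M) (sum_norm_charCoef_sq_le_one hf)
  rw [gowersNorm_two_eq]
  calc _ ≤ (M ^ 2) ^ (4 : ℝ)⁻¹ := by gcongr
    _ = M ^ ((1 : ℝ) / 2) := by
        rw [← Real.rpow_natCast, ← Real.rpow_mul hM0]
        norm_num

end

/-- **Inverse theorem for the `U²(G)` norm**: for any bounded `f : G → 𝒟`,
`sup_ξ |f̂(ξ)| ≤ ‖f‖_{U²(G)} ≤ (sup_ξ |f̂(ξ)|)^{1/2}`. -/
theorem inverse_U2 {G : Type*} [AddCommGroup G] [Fintype G]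
    (f : G → ℂ) (hf : ∀ x, norm (f x) ≤ 1) :
    (⨆ ξ : G →+ AddCircle (1 : ℝ), norm (fourierCoef f ξ)) ≤ gowersNorm 2 f ∧
      gowersNorm 2 f ≤
        (⨆ ξ : G →+ AddCircle (1 : ℝ), norm (fourierCoef f ξ)) ^ ((1 : ℝ) / 2) := by
  have hcoef_le (ξ : G →+ AddCircle (1 : ℝ)) : ‖fourierCoef f ξ‖ ≤ gowersNorm 2 f := by
    rw [fourierCoef_eq_charCoef]
    exact norm_charCoef_le_gowersNorm f _
  have hbdd : BddAbove (Set.range fun ξ ↦ ‖fourierCoef f ξ‖) := ⟨_, Set.forall_mem_range.2 hcoef_le⟩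
  refine ⟨ciSup_le hcoef_le, gowersNorm_two_le_rpow_of_forall_norm_charCoef_le hf fun ψ ↦ ?_⟩
  obtain ⟨ξ, rfl⟩ := dualAddChar_surjective ψ
  rw [← fourierCoef_eq_charCoef]
  exact le_ciSup hbdd ξ
end

section
/- Large U³ norm gives many additive quadruples: Let G be a finite additive (abelian) group with |G| = N, let η > 0, and let f : G → 𝒟 be a bounded function with ‖f‖_{U³(G)} ≥ η. Then there exist a set H ⊆ G and a function ξ : H → Ĝ, with graph Γ := {(h, ξ_h) : h ∈ H} ⊆ G × Ĝ, such that the number of quadruples (z₁,z₂,z₃,z₄) ∈ Γ⁴ with z₁ + z₂ = z₃ + z₄ is at least 2^{−8} η^{64} N³, and moreover |𝔼_{x∈G} f(x+h) \overline{f(x)} e(−ξ_h·x)| ≥ η⁴/2^{1/2} for every h ∈ H. -/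
open Finset

/-!
Write `Δ_h f(x) = f(x + h) conj(f(x))` and `F(h, ξ) = ∑ₓ Δ_h f(x) e(-ξ·x)`. Unfolding the cube
once, `N⁴ ‖f‖_{U³}⁸ = ∑_h N³ ‖Δ_h f‖_{U²}⁴ = N⁻¹ ∑_{h,ξ} |F(h, ξ)|⁴`, and Parseval
(`∑_ξ |F(h, ξ)|² ≤ N²`) turns this into `∑_h |F(h, ξ_h)|² ≥ η⁸ N³` for `ξ_h` maximising
`|F(h, ·)|`; by popularity the set `H` of `h` with `|F(h, ξ_h)|² ≥ η⁸ N² / 2` is large.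
Expanding `∑_{h ∈ H} |F(h, ξ_h)|²` as a bilinear form in `f` and applying Cauchy–Schwarz in `(x, y)`
bounds it by `N (∑_{h, h' ∈ H} |F(h - h', ξ_h - ξ_{h'})|²)^{1/2}`. Each summand depends only on
`(h - h', ξ_h - ξ_{h'})`, so a last Cauchy–Schwarz over the fibres of this map, together with
`∑_{a, ξ} |F(a, ξ)|⁴ ≤ N⁵`, bounds the sum by the number of coincidences
`(h₁ - h₂, ξ_{h₁} - ξ_{h₂}) = (h₃ - h₄, ξ_{h₃} - ξ_{h₄})`, i.e. of additive quadruples in the graph.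
-/

open ComplexConjugate

namespace GowersU3

@[to_additive]
lemma prod_pi_fin_succ {α M : Type*} [Fintype α] [CommMonoid M] {n : ℕ}
    (F : (Fin (n + 1) → α) → M) :
    ∏ v : Fin (n + 1) → α, F v = ∏ a : α, ∏ v : Fin n → α, F (Fin.cons a v) := by
  rw [← (Fin.consEquiv fun _ => α).prod_comp, Fintype.prod_prod_type]
  rfl

lemma card_filter_cons_eq_true {n : ℕ} (b : Bool) (ω : Fin n → Bool) :
    (univ.filter fun i => (Fin.cons b ω : Fin (n + 1) → Bool) i = true).card =
      (univ.filter fun i => ω i = true).card + if b then 1 else 0 := by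
  simp only [card_filter, Fin.sum_univ_succ, Fin.cons_zero, Fin.cons_succ]
  ring

lemma sum_filter_cons_eq_true {M : Type*} [AddCommMonoid M] {n : ℕ} (b : Bool) (ω : Fin n → Bool)
    (c : M) (h : Fin n → M) :
    ∑ i ∈ univ.filter (fun i => (Fin.cons b ω : Fin (n + 1) → Bool) i = true),
        (Fin.cons c h : Fin (n + 1) → M) i =
      (∑ i ∈ univ.filter (fun i => ω i = true), h i) + if b then c else 0 := by
  simp only [sum_filter, Fin.sum_univ_succ, Fin.cons_zero, Fin.cons_succ]
  rw [add_comm]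

lemma conj_iterate_mul (k : ℕ) (a b : ℂ) :
    (conj : ℂ → ℂ)^[k] (a * b) = (conj : ℂ → ℂ)^[k] a * (conj : ℂ → ℂ)^[k] b := by
  induction k with
  | zero => rfl
  | succ k ih => simp only [Function.iterate_succ_apply', ih, map_mul]

lemma conj_iterate_conj (k : ℕ) (a : ℂ) :
    (conj : ℂ → ℂ)^[k] (conj a) = conj ((conj : ℂ → ℂ)^[k] a) := by
  rw [← Function.iterate_succ_apply, Function.iterate_succ_apply']

lemma half_mul_card_le_card_filter_of_mul_le_sum {ι : Type*} (s : Finset ι) (M : ι → ℝ)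
    {B δ : ℝ} (hB : 0 < B) (hδ : 0 ≤ δ) (hM : ∀ i ∈ s, M i ≤ B)
    (hsum : δ * #s * B ≤ ∑ i ∈ s, M i) :
    δ / 2 * #s ≤ #(s.filter fun i => δ / 2 * B ≤ M i) := by
  have hlarge : ∑ i ∈ s.filter (fun i => δ / 2 * B ≤ M i), M i ≤
      #(s.filter fun i => δ / 2 * B ≤ M i) * B := by
    simpa using sum_le_card_nsmul _ _ _ fun i hi => hM i (mem_filter.mp hi).1
  have hsmall : ∑ i ∈ s.filter (fun i => ¬δ / 2 * B ≤ M i), M i ≤ #s * (δ / 2 * B) := by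
    calc _ ≤ #(s.filter fun i => ¬δ / 2 * B ≤ M i) * (δ / 2 * B) := by
          simpa using sum_le_card_nsmul (s.filter fun i => ¬δ / 2 * B ≤ M i) M (δ / 2 * B)
            fun i hi => (not_le.mp (mem_filter.mp hi).2).le
      _ ≤ #s * (δ / 2 * B) :=
          mul_le_mul_of_nonneg_right (mod_cast card_filter_le _ _) (by positivity)
  rw [← sum_filter_add_sum_filter_not s fun i => δ / 2 * B ≤ M i] at hsum
  nlinarith

lemma sq_half_mul_card_mul_le_sum_filter {ι : Type*} (s : Finset ι) (M : ι → ℝ)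
    {B δ : ℝ} (hB : 0 < B) (hδ : 0 ≤ δ) (hM : ∀ i ∈ s, M i ≤ B)
    (hsum : δ * #s * B ≤ ∑ i ∈ s, M i) :
    (δ / 2) ^ 2 * #s * B ≤ ∑ i ∈ s.filter (fun i => δ / 2 * B ≤ M i), M i := by
  calc (δ / 2) ^ 2 * #s * B = δ / 2 * #s * (δ / 2 * B) := by ring
    _ ≤ #(s.filter fun i => δ / 2 * B ≤ M i) * (δ / 2 * B) := by
        gcongr
        exact half_mul_card_le_card_filter_of_mul_le_sum s M hB hδ hM hsum
    _ ≤ ∑ i ∈ s.filter (fun i => δ / 2 * B ≤ M i), M i := by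
        simpa using card_nsmul_le_sum _ M _ fun i hi => (mem_filter.mp hi).2

lemma div_sqrt_two_le_norm_inv_natCast_mul {a : ℝ} {n : ℕ} (hn : 0 < n) {z : ℂ}
    (h : a ^ 2 / 2 * n ^ 2 ≤ ‖z‖ ^ 2) : a / √2 ≤ ‖(n : ℂ)⁻¹ * z‖ := by
  rw [norm_mul, norm_inv, Complex.norm_natCast]
  refine le_of_pow_le_pow_left₀ two_ne_zero (by positivity) ?_
  rw [div_pow, Real.sq_sqrt zero_le_two, mul_pow, inv_pow, inv_mul_eq_div,
    le_div_iff₀ (by positivity)]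
  exact h

lemma sum_sq_norm_sum_mul_conj {ι α : Type*} [Fintype α] (s : Finset ι) (F : ι → α → ℂ) :
    ∑ x, ∑ y, ‖∑ i ∈ s, F i x * conj (F i y)‖ ^ 2 =
      ∑ i ∈ s, ∑ j ∈ s, ‖∑ x, F i x * conj (F j x)‖ ^ 2 := by
  apply Complex.ofReal_injective
  push_cast
  simp_rw [← Complex.mul_conj', map_sum, sum_mul_sum, map_mul, Complex.conj_conj]
  calc _ = ∑ x, ∑ i ∈ s, ∑ j ∈ s, ∑ y, F i x * conj (F i y) * (conj (F j x) * F j y) :=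
        sum_congr rfl fun x _ => by rw [sum_comm_cycle, sum_comm_cycle]
    _ = ∑ i ∈ s, ∑ j ∈ s, ∑ x, ∑ y, F i x * conj (F i y) * (conj (F j x) * F j y) := by
        rw [sum_comm_cycle, sum_comm_cycle]
    _ = _ := sum_congr rfl fun i _ => sum_congr rfl fun j _ =>
        sum_congr rfl fun x _ => sum_congr rfl fun y _ => by ring

lemma sq_sum_sq_norm_sum_mul_conj_le {ι α : Type*} [Fintype α] (s : Finset ι) (F : ι → α → ℂ)
    {u : α → ℂ} (hu : ∀ x, ‖u x‖ ≤ 1) :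
    (∑ i ∈ s, ‖∑ x, F i x * conj (u x)‖ ^ 2) ^ 2 ≤
      (Fintype.card α : ℝ) ^ 2 * ∑ i ∈ s, ∑ j ∈ s, ‖∑ x, F i x * conj (F j x)‖ ^ 2 := by
  set A : α → α → ℂ := fun x y => ∑ i ∈ s, F i x * conj (F i y)
  have hexpand : ((∑ i ∈ s, ‖∑ x, F i x * conj (u x)‖ ^ 2 : ℝ) : ℂ) =
      ∑ x, ∑ y, conj (u x) * u y * A x y := by
    push_cast
    simp_rw [← Complex.mul_conj', map_sum, sum_mul_sum, A, mul_sum]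
    rw [sum_comm_cycle, sum_comm_cycle]
    refine sum_congr rfl fun x _ => sum_congr rfl fun y _ => sum_congr rfl fun i _ => ?_
    simp only [map_mul, Complex.conj_conj]
    ring
  have hle : ∑ i ∈ s, ‖∑ x, F i x * conj (u x)‖ ^ 2 ≤ ∑ x, ∑ y, ‖A x y‖ := by
    rw [← Complex.norm_of_nonneg (by positivity : 0 ≤ ∑ i ∈ s, ‖∑ x, F i x * conj (u x)‖ ^ 2),
      hexpand]
    refine (norm_sum_le _ _).trans (sum_le_sum fun x _ => (norm_sum_le _ _).trans ?_)
    refine sum_le_sum fun y _ => ?_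
    rw [norm_mul, norm_mul, Complex.norm_conj]
    exact mul_le_of_le_one_left (norm_nonneg _) (mul_le_one₀ (hu x) (norm_nonneg _) (hu y))
  have hCS : (∑ x, ∑ y, ‖A x y‖) ^ 2 ≤ (Fintype.card α : ℝ) ^ 2 * ∑ x, ∑ y, ‖A x y‖ ^ 2 := by
    simpa [← Fintype.sum_prod_type', sq] using
      sq_sum_le_card_mul_sum_sq (s := (univ : Finset (α × α))) (f := fun p => ‖A p.1 p.2‖)
  rw [← sum_sq_norm_sum_mul_conj]
  exact (pow_le_pow_left₀ (by positivity) hle 2).trans hCS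

def sameFiberPairs {α β : Type*} [DecidableEq β] (s : Finset α) (π : α → β) : Finset (α × α) :=
  (s ×ˢ s).filter fun pq => π pq.1 = π pq.2

lemma sq_sum_comp_le_card_sameFiberPairs_mul {α β : Type*} [DecidableEq β] (s : Finset α)
    (π : α → β) (w : β → ℝ) :
    (∑ p ∈ s, w (π p)) ^ 2 ≤ #(sameFiberPairs s π) * ∑ v ∈ s.image π, w v ^ 2 := by
  have hfiber : ∀ v, (sameFiberPairs s π).filter (fun pq => π pq.1 = v) =
      s.filter (π · = v) ×ˢ s.filter (π · = v) := by
    intro v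
    ext ⟨p, q⟩
    simp only [sameFiberPairs, mem_filter, mem_product]
    constructor
    · rintro ⟨⟨⟨hp, hq⟩, hpq⟩, rfl⟩
      exact ⟨⟨hp, rfl⟩, hq, hpq.symm⟩
    · rintro ⟨⟨hp, rfl⟩, hq, hqv⟩
      exact ⟨⟨⟨hp, hq⟩, hqv.symm⟩, rfl⟩
  have hcard : #(sameFiberPairs s π) = ∑ v ∈ s.image π, #(s.filter (π · = v)) ^ 2 := by
    rw [card_eq_sum_card_fiberwise (f := fun pq => π pq.1) (t := s.image π)]
    · simp_rw [hfiber, card_product, sq]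
    · intro pq hpq
      rw [mem_coe, sameFiberPairs, mem_filter, mem_product] at hpq
      exact mem_image_of_mem π hpq.1.1
  rw [sum_comp, hcard]
  push_cast
  simpa only [nsmul_eq_mul] using sum_mul_sq_le_sq_mul_sq (s.image π)
    (fun v => (#(s.filter (π · = v)) : ℝ)) w

def graphOn {A B : Type*} (H : Set A) (ζ : A → B) : Set (A × B) := {p | p.1 ∈ H ∧ p.2 = ζ p.1}

def addQuadruples {A : Type*} [Add A] (Γ : Set A) : Set (A × A × A × A) :=
  {z | z.1 ∈ Γ ∧ z.2.1 ∈ Γ ∧ z.2.2.1 ∈ Γ ∧ z.2.2.2 ∈ Γ ∧ z.1 + z.2.1 = z.2.2.1 + z.2.2.2}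

lemma ncard_addQuadruples_graphOn {A B : Type*} [AddCommGroup A] [AddCommGroup B]
    [DecidableEq A] [DecidableEq B] (H : Finset A) (ζ : A → B) :
    (addQuadruples (graphOn (H : Set A) ζ)).ncard =
      #(sameFiberPairs (H ×ˢ H) fun p => (p.1 - p.2, ζ p.1 - ζ p.2)) := by
  -- `a + d = c + b ↔ a - b = c - d`, so `((a, b), (c, d)) ↦ (a, d, c, b)` matches the two sides.
  set Ψ : (A × A) × (A × A) → (A × B) × (A × B) × (A × B) × (A × B) :=
    fun pq => ((pq.1.1, ζ pq.1.1), (pq.2.2, ζ pq.2.2), (pq.2.1, ζ pq.2.1), (pq.1.2, ζ pq.1.2))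
  have hΨ : Function.Injective Ψ := by
    intro pq pq' h
    simp only [Ψ, Prod.mk.injEq] at h
    ext <;> simp [h]
  have himage : addQuadruples (graphOn (H : Set A) ζ) =
      Ψ '' (sameFiberPairs (H ×ˢ H) fun p => (p.1 - p.2, ζ p.1 - ζ p.2)) := by
    ext ⟨⟨a, α⟩, ⟨d, δ⟩, ⟨c, γ⟩, ⟨b, β⟩⟩
    simp only [addQuadruples, graphOn, sameFiberPairs, Set.mem_image, coe_filter, mem_product,
      Set.mem_ofPred_eq, mem_coe, Ψ, Prod.ext_iff, Prod.mk_add_mk, sub_eq_sub_iff_add_eq_add]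
    constructor
    · rintro ⟨⟨ha, rfl⟩, ⟨hd, rfl⟩, ⟨hc, rfl⟩, ⟨hb, rfl⟩, hadd, hζadd⟩
      exact ⟨((a, b), (c, d)), ⟨⟨⟨ha, hb⟩, hc, hd⟩, hadd, hζadd⟩, ⟨rfl, rfl⟩, ⟨rfl, rfl⟩,
        ⟨rfl, rfl⟩, rfl, rfl⟩
    · rintro ⟨⟨⟨a, b⟩, ⟨c, d⟩⟩, ⟨⟨⟨ha, hb⟩, hc, hd⟩, hadd, hζadd⟩, ⟨rfl, rfl⟩, ⟨rfl, rfl⟩,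
        ⟨rfl, rfl⟩, rfl, rfl⟩
      exact ⟨⟨ha, rfl⟩, ⟨hd, rfl⟩, ⟨hc, rfl⟩, ⟨hb, rfl⟩, hadd, hζadd⟩
  rw [himage, Set.ncard_image_of_injective _ hΨ, Set.ncard_coe_finset]

lemma ee_add (a b : AddCircle (1 : ℝ)) : ee (a + b) = ee a * ee b := by
  simp [ee, AddCircle.toCircle_add]

lemma ee_neg (a : AddCircle (1 : ℝ)) : ee (-a) = conj (ee a) := by
  rw [ee, ee, AddCircle.toCircle_neg, Circle.coe_inv_eq_conj]

lemma ee_neg_mul_self (a : AddCircle (1 : ℝ)) : ee (-a) * ee a = 1 := by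
  rw [← ee_add, neg_add_cancel]
  simp [ee]

lemma norm_ee (a : AddCircle (1 : ℝ)) : ‖ee a‖ = 1 := Circle.norm_coe _

noncomputable def addCircleEquivCircle : AddCircle (1 : ℝ) ≃+ Additive Circle :=
  AddEquiv.mk' ((AddCircle.homeomorphCircle one_ne_zero).toEquiv.trans Additive.ofMul)
    fun x y => by simp [AddCircle.homeomorphCircle_apply, AddCircle.toCircle_add]

section

variable {G : Type*} [AddCommGroup G]

def mulDeriv (c : G) (f : G → ℂ) (x : G) : ℂ := f (x + c) * conj (f x)

lemma norm_mulDeriv_le {f : G → ℂ} (hf : ∀ x, ‖f x‖ ≤ 1) (c x : G) : ‖mulDeriv c f x‖ ≤ 1 := by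
  rw [mulDeriv, norm_mul, Complex.norm_conj]
  exact mul_le_one₀ (hf _) (norm_nonneg _) (hf _)

variable [Fintype G]

noncomputable def dualEquivAddChar : (G →+ AddCircle (1 : ℝ)) ≃ AddChar G ℂ :=
  addCircleEquivCircle.addMonoidHomCongrRightEquiv.trans
    (AddChar.toAddMonoidHomEquiv.symm.trans AddChar.circleEquivComplex.toEquiv)

lemma dualEquivAddChar_apply (ξ : G →+ AddCircle (1 : ℝ)) (x : G) :
    dualEquivAddChar ξ x = ee (ξ x) := by
  change ((AddCircle.homeomorphCircle one_ne_zero (ξ x) : Circle) : ℂ) = _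
  rw [AddCircle.homeomorphCircle_apply, ee]

noncomputable instance : Fintype (G →+ AddCircle (1 : ℝ)) := Fintype.ofEquiv _ dualEquivAddChar.symm

lemma sum_ee_apply [DecidableEq G] (z : G) :
    ∑ ξ : G →+ AddCircle (1 : ℝ), ee (ξ z) = if z = 0 then (Fintype.card G : ℂ) else 0 := by
  simp_rw [← dualEquivAddChar_apply]
  rw [dualEquivAddChar.sum_comp (fun ψ => ψ z), AddChar.sum_apply_eq_ite]

/-- Unnormalised: `N` times the paper's `𝔼ₓ g(x) e(-ξ·x)`. -/
noncomputable def fourierSum (g : G → ℂ) (ξ : G →+ AddCircle (1 : ℝ)) : ℂ :=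
  ∑ x, g x * ee (-(ξ x))

lemma sum_sq_norm_fourierSum (g : G → ℂ) :
    ∑ ξ, ‖fourierSum g ξ‖ ^ 2 = Fintype.card G * ∑ x, ‖g x‖ ^ 2 := by
  classical
  apply Complex.ofReal_injective
  push_cast
  simp_rw [← Complex.mul_conj', fourierSum, map_sum, sum_mul_sum, map_mul, ← ee_neg, neg_neg]
  rw [sum_comm, mul_sum]
  refine sum_congr rfl fun x _ => ?_
  rw [sum_comm]
  simp_rw [mul_mul_mul_comm _ (ee _), ← ee_add, ← map_neg, ← map_add, ← mul_sum, sum_ee_apply,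
    neg_add_eq_zero, mul_ite, mul_zero, sum_ite_eq, mem_univ, if_true]
  ring

lemma norm_fourierSum_le {g : G → ℂ} (hg : ∀ x, ‖g x‖ ≤ 1) (ξ : G →+ AddCircle (1 : ℝ)) :
    ‖fourierSum g ξ‖ ≤ Fintype.card G := by
  refine (norm_sum_le _ _).trans ?_
  simpa [norm_ee] using sum_le_sum fun x (_ : x ∈ univ) => hg x

lemma sum_sq_norm_fourierSum_le {g : G → ℂ} (hg : ∀ x, ‖g x‖ ≤ 1) :
    ∑ ξ, ‖fourierSum g ξ‖ ^ 2 ≤ (Fintype.card G : ℝ) ^ 2 := by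
  rw [sum_sq_norm_fourierSum, sq]
  gcongr
  simpa using sum_le_sum fun x (_ : x ∈ univ) => pow_le_one₀ (norm_nonneg _) (hg x)

noncomputable def autocorr (g : G → ℂ) (c : G) : ℂ := ∑ x, mulDeriv c g x

lemma fourierSum_autocorr (g : G → ℂ) (ξ : G →+ AddCircle (1 : ℝ)) :
    fourierSum (autocorr g) ξ = (‖fourierSum g ξ‖ : ℂ) ^ 2 := by
  rw [← Complex.mul_conj', fourierSum, fourierSum, map_sum, sum_mul_sum]
  simp_rw [autocorr, mulDeriv, sum_mul]
  rw [sum_comm]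
  conv_rhs => rw [sum_comm]
  refine sum_congr rfl fun x _ => ?_
  refine Fintype.sum_equiv (Equiv.addRight x) _ _ fun c => ?_
  simp only [Equiv.coe_addRight, map_mul, ← ee_neg, neg_neg, map_add, neg_add, ee_add, add_comm c]
  linear_combination -(g (x + c) * conj (g x) * ee (-ξ c)) * ee_neg_mul_self (ξ x)

lemma card_mul_sum_sq_norm_autocorr (g : G → ℂ) :
    Fintype.card G * ∑ c, ‖autocorr g c‖ ^ 2 = ∑ ξ, ‖fourierSum g ξ‖ ^ 4 := by
  rw [← sum_sq_norm_fourierSum]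
  simp_rw [fourierSum_autocorr, ← Complex.ofReal_pow, Complex.norm_real, Real.norm_eq_abs,
    sq_abs, ← pow_mul]

lemma card_mul_sum_sq_norm_autocorr_le {g : G → ℂ} (hg : ∀ x, ‖g x‖ ≤ 1)
    (ξ₀ : G →+ AddCircle (1 : ℝ)) (hξ₀ : ∀ ξ, ‖fourierSum g ξ‖ ≤ ‖fourierSum g ξ₀‖) :
    Fintype.card G * ∑ c, ‖autocorr g c‖ ^ 2 ≤ ‖fourierSum g ξ₀‖ ^ 2 * Fintype.card G ^ 2 := by
  rw [card_mul_sum_sq_norm_autocorr]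
  calc ∑ ξ, ‖fourierSum g ξ‖ ^ 4 ≤ ∑ ξ, ‖fourierSum g ξ₀‖ ^ 2 * ‖fourierSum g ξ‖ ^ 2 := by
        gcongr with ξ
        rw [show 4 = 2 + 2 by rfl, pow_add]
        gcongr
        exact hξ₀ ξ
    _ ≤ ‖fourierSum g ξ₀‖ ^ 2 * Fintype.card G ^ 2 := by
        rw [← mul_sum]
        gcongr
        exact sum_sq_norm_fourierSum_le hg

noncomputable def gowersSum (d : ℕ) (f : G → ℂ) : ℂ :=
  ∑ x : G, ∑ h : Fin d → G, ∏ ω : Fin d → Bool,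
    (conj : ℂ → ℂ)^[(univ.filter fun i => ω i = true).card]
      (f (x + ∑ i ∈ univ.filter (fun i => ω i = true), h i))

lemma gowersNorm_eq (d : ℕ) (f : G → ℂ) :
    gowersNorm d f = ‖((Fintype.card G : ℂ) ^ (d + 1))⁻¹ * gowersSum d f‖ ^ ((2 : ℝ) ^ d)⁻¹ :=
  rfl

lemma gowersSum_zero (f : G → ℂ) : gowersSum 0 f = ∑ x, f x := by
  simp [gowersSum]

lemma gowersSum_succ (d : ℕ) (f : G → ℂ) :
    gowersSum (d + 1) f = ∑ c, conj (gowersSum d (mulDeriv c f)) := by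
  simp only [gowersSum, map_sum, map_prod, sum_pi_fin_succ (n := d), prod_pi_fin_succ (n := d),
    Fintype.prod_bool, ← prod_mul_distrib]
  rw [sum_comm]
  refine sum_congr rfl fun c _ => sum_congr rfl fun x _ => sum_congr rfl fun h _ => ?_
  refine prod_congr rfl fun ω _ => ?_
  simp only [card_filter_cons_eq_true, sum_filter_cons_eq_true, if_true, if_false, add_zero,
    Bool.false_eq_true, Function.iterate_succ_apply', mulDeriv, ← add_assoc]
  rw [conj_iterate_mul, conj_iterate_conj, map_mul, Complex.conj_conj]

lemma gowersSum_one (u : G → ℂ) : gowersSum 1 u = ((‖∑ x, u x‖ ^ 2 : ℝ) : ℂ) := by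
  rw [gowersSum_succ, Complex.ofReal_pow, ← Complex.mul_conj', map_sum, sum_mul_sum]
  simp only [gowersSum_zero, mulDeriv, map_sum, map_mul, Complex.conj_conj]
  rw [sum_comm]
  refine sum_congr rfl fun y _ => ?_
  exact Fintype.sum_equiv (Equiv.addRight y) _ _ fun c => by simp [mul_comm, add_comm]

lemma gowersSum_two (g : G → ℂ) : gowersSum 2 g = ((∑ c, ‖autocorr g c‖ ^ 2 : ℝ) : ℂ) := by
  simp [gowersSum_succ (d := 1), gowersSum_one, autocorr]

lemma gowersSum_three (f : G → ℂ) :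
    gowersSum 3 f = ((∑ c, ∑ s, ‖autocorr (mulDeriv c f) s‖ ^ 2 : ℝ) : ℂ) := by
  simp [gowersSum_succ (d := 2), gowersSum_two]

lemma gowersNorm_three_pow_eight (f : G → ℂ) :
    gowersNorm 3 f ^ 8 =
      ((Fintype.card G : ℝ) ^ 4)⁻¹ * ∑ c, ∑ s, ‖autocorr (mulDeriv c f) s‖ ^ 2 := by
  have hnonneg : 0 ≤ ((Fintype.card G : ℝ) ^ 4)⁻¹ * ∑ c, ∑ s, ‖autocorr (mulDeriv c f) s‖ ^ 2 := by
    positivity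
  rw [gowersNorm_eq, gowersSum_three, ← Complex.ofReal_natCast, ← Complex.ofReal_pow,
    ← Complex.ofReal_inv, ← Complex.ofReal_mul, Complex.norm_of_nonneg hnonneg,
    ← Real.rpow_natCast, ← Real.rpow_mul hnonneg]
  norm_num

lemma gowersNorm_three_pow_eight_mul_le {f : G → ℂ} (hf : ∀ x, ‖f x‖ ≤ 1)
    (ζ : G → G →+ AddCircle (1 : ℝ))
    (hζ : ∀ h ξ, ‖fourierSum (mulDeriv h f) ξ‖ ≤ ‖fourierSum (mulDeriv h f) (ζ h)‖) :
    gowersNorm 3 f ^ 8 * Fintype.card G ^ 3 ≤ ∑ h, ‖fourierSum (mulDeriv h f) (ζ h)‖ ^ 2 := by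
  have hN : (0 : ℝ) < Fintype.card G := by exact_mod_cast Fintype.card_pos
  have hsum : ∑ c, ∑ s, ‖autocorr (mulDeriv c f) s‖ ^ 2 ≤
      Fintype.card G * ∑ h, ‖fourierSum (mulDeriv h f) (ζ h)‖ ^ 2 := by
    rw [mul_sum]
    gcongr with h
    refine le_of_mul_le_mul_left ?_ hN
    linarith [card_mul_sum_sq_norm_autocorr_le (norm_mulDeriv_le hf h) (ζ h) (hζ h)]
  rw [gowersNorm_three_pow_eight, inv_mul_eq_div, div_mul_eq_mul_div, div_le_iff₀ (by positivity)]
  calc _ ≤ (Fintype.card G : ℝ) * (∑ h, ‖fourierSum (mulDeriv h f) (ζ h)‖ ^ 2) *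
        Fintype.card G ^ 3 := by gcongr
    _ = _ := by ring

lemma norm_sum_twist_mul_conj_twist (f : G → ℂ) (a b : G) (ξ ξ' : G →+ AddCircle (1 : ℝ)) :
    ‖∑ x, f (x + a) * ee (-(ξ x)) * conj (f (x + b) * ee (-(ξ' x)))‖ =
      ‖fourierSum (mulDeriv (a - b) f) (ξ - ξ')‖ := by
  suffices h : ∑ x, f (x + a) * ee (-(ξ x)) * conj (f (x + b) * ee (-(ξ' x))) =
      ee ((ξ - ξ') b) * fourierSum (mulDeriv (a - b) f) (ξ - ξ') by
    rw [h, norm_mul, norm_ee, one_mul]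
  rw [fourierSum, mul_sum]
  refine Fintype.sum_equiv (Equiv.addRight b) _ _ fun x => ?_
  have hθ : -(ξ x) + ξ' x = (ξ - ξ') b + -((ξ - ξ') (x + b)) := by
    simp only [AddMonoidHom.sub_apply, map_add]
    abel
  simp only [Equiv.coe_addRight, mulDeriv, map_mul, ← ee_neg, neg_neg]
  rw [add_add_sub_cancel]
  calc _ = f (x + a) * conj (f (x + b)) * ee (-(ξ x) + ξ' x) := by rw [ee_add]; ring
    _ = _ := by rw [hθ, ee_add]; ring

lemma sq_sum_sq_norm_fourierSum_mulDeriv_le {f : G → ℂ} (hf : ∀ x, ‖f x‖ ≤ 1) (H : Finset G)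
    (ζ : G → G →+ AddCircle (1 : ℝ)) :
    (∑ h ∈ H, ‖fourierSum (mulDeriv h f) (ζ h)‖ ^ 2) ^ 2 ≤
      (Fintype.card G : ℝ) ^ 2 *
        ∑ h ∈ H, ∑ h' ∈ H, ‖fourierSum (mulDeriv (h - h') f) (ζ h - ζ h')‖ ^ 2 := by
  have hF : ∀ h, fourierSum (mulDeriv h f) (ζ h) = ∑ x, f (x + h) * ee (-(ζ h x)) * conj (f x) :=
    fun h => sum_congr rfl fun x _ => by rw [mulDeriv]; ring
  simp_rw [hF, ← norm_sum_twist_mul_conj_twist]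
  exact sq_sum_sq_norm_sum_mul_conj_le H (fun h x => f (x + h) * ee (-(ζ h x))) hf

lemma sum_norm_fourierSum_mulDeriv_pow_four_le {f : G → ℂ} (hf : ∀ x, ‖f x‖ ≤ 1) :
    ∑ v : G × (G →+ AddCircle (1 : ℝ)), ‖fourierSum (mulDeriv v.1 f) v.2‖ ^ 4 ≤
      (Fintype.card G : ℝ) ^ 5 := by
  calc ∑ v : G × (G →+ AddCircle (1 : ℝ)), ‖fourierSum (mulDeriv v.1 f) v.2‖ ^ 4
      ≤ ∑ a, ∑ ξ, (Fintype.card G : ℝ) ^ 2 * ‖fourierSum (mulDeriv a f) ξ‖ ^ 2 := by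
        rw [Fintype.sum_prod_type]
        gcongr with a _ ξ
        rw [show 4 = 2 + 2 by rfl, pow_add]
        gcongr
        exact norm_fourierSum_le (norm_mulDeriv_le hf a) ξ
    _ ≤ ∑ _a : G, (Fintype.card G : ℝ) ^ 2 * Fintype.card G ^ 2 := by
        simp_rw [← mul_sum]
        gcongr with a
        exact sum_sq_norm_fourierSum_le (norm_mulDeriv_le hf a)
    _ = (Fintype.card G : ℝ) ^ 5 := by simp; ring

lemma pow_four_sum_sq_norm_fourierSum_mulDeriv_le_mul_ncard {f : G → ℂ} (hf : ∀ x, ‖f x‖ ≤ 1)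
    (H : Finset G) (ζ : G → G →+ AddCircle (1 : ℝ)) :
    (∑ h ∈ H, ‖fourierSum (mulDeriv h f) (ζ h)‖ ^ 2) ^ 4 ≤
      (Fintype.card G : ℝ) ^ 9 * (addQuadruples (graphOn (H : Set G) ζ)).ncard := by
  classical
  set w : G × (G →+ AddCircle (1 : ℝ)) → ℝ := fun v => ‖fourierSum (mulDeriv v.1 f) v.2‖ ^ 2
  set π : G × G → G × (G →+ AddCircle (1 : ℝ)) := fun p => (p.1 - p.2, ζ p.1 - ζ p.2)
  set S := ∑ h ∈ H, ‖fourierSum (mulDeriv h f) (ζ h)‖ ^ 2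
  set W := ∑ p ∈ H ×ˢ H, w (π p)
  set Q : ℝ := ((addQuadruples (graphOn (H : Set G) ζ)).ncard : ℝ) with hQ
  have hSW : S ^ 2 ≤ Fintype.card G ^ 2 * W := by
    simpa only [W, sum_product] using sq_sum_sq_norm_fourierSum_mulDeriv_le hf H ζ
  have hW : W ^ 2 ≤ Q * Fintype.card G ^ 5 := by
    rw [hQ, ncard_addQuadruples_graphOn]
    refine (sq_sum_comp_le_card_sameFiberPairs_mul _ π w).trans ?_
    gcongr
    refine (sum_le_univ_sum_of_nonneg fun v => by positivity).trans ?_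
    simpa only [w, ← pow_mul] using sum_norm_fourierSum_mulDeriv_pow_four_le hf
  calc S ^ 4 = (S ^ 2) ^ 2 := by ring
    _ ≤ (Fintype.card G ^ 2 * W) ^ 2 := by gcongr
    _ = Fintype.card G ^ 4 * W ^ 2 := by ring
    _ ≤ Fintype.card G ^ 4 * (Q * Fintype.card G ^ 5) := by gcongr
    _ = _ := by ring

end

end GowersU3

open GowersU3 in
/-- **Large `U³` norm gives many additive quadruples**: if `f : G → 𝒟` has `‖f‖_{U³} ≥ η`,
then there are `H ⊆ G` and `ξ : H → Ĝ` whose graph `Γ = {(h,ξ_h) : h ∈ H} ⊆ G × Ĝ`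
contains at least `2^{-8} η^{64} N³` additive quadruples `z₁ + z₂ = z₃ + z₄`, and moreover
`|𝔼_x f(x+h) conj(f(x)) e(-ξ_h·x)| ≥ η⁴/2^{1/2}` for every `h ∈ H`. -/
theorem large_U3_gives_additive_quadruples {G : Type*} [AddCommGroup G] [Fintype G]
    (η : ℝ) (hη : 0 < η) (f : G → ℂ) (hf : ∀ x, norm (f x) ≤ 1)
    (hU3 : η ≤ gowersNorm 3 f) :
    ∃ (H : Set G) (ξ : G → (G →+ AddCircle (1 : ℝ)))
      (Γ : Set (G × (G →+ AddCircle (1 : ℝ)))),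
      Γ = {p | p.1 ∈ H ∧ p.2 = ξ p.1} ∧
      (2 : ℝ) ^ (-(8 : ℤ)) * η ^ 64 * (Fintype.card G : ℝ) ^ 3 ≤
        (({z : (G × (G →+ AddCircle (1 : ℝ))) × (G × (G →+ AddCircle (1 : ℝ))) ×
              (G × (G →+ AddCircle (1 : ℝ))) × (G × (G →+ AddCircle (1 : ℝ))) |
            z.1 ∈ Γ ∧ z.2.1 ∈ Γ ∧ z.2.2.1 ∈ Γ ∧ z.2.2.2 ∈ Γ ∧
              z.1 + z.2.1 = z.2.2.1 + z.2.2.2}).ncard : ℝ) ∧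
      ∀ h ∈ H,
        η ^ 4 / Real.sqrt 2 ≤
          norm ((Fintype.card G : ℂ)⁻¹ *
            ∑ x : G, f (x + h) * (starRingEnd ℂ) (f x) * ee (-(ξ h x))) := by
  classical
  set N : ℝ := (Fintype.card G : ℝ)
  have hN : 0 < N := Nat.cast_pos.mpr Fintype.card_pos
  choose ζ _ hζ using fun h => exists_max_image univ
    (fun ξ => ‖fourierSum (mulDeriv h f) ξ‖) (univ_nonempty (α := G →+ AddCircle (1 : ℝ)))
  set M : G → ℝ := fun h => ‖fourierSum (mulDeriv h f) (ζ h)‖ ^ 2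
  set H := univ.filter fun h => η ^ 8 / 2 * N ^ 2 ≤ M h
  have hsum : η ^ 8 * #(univ : Finset G) * N ^ 2 ≤ ∑ h, M h := by
    calc _ = η ^ 8 * N ^ 3 := by rw [card_univ]; ring
      _ ≤ gowersNorm 3 f ^ 8 * N ^ 3 := by gcongr
      _ ≤ ∑ h, M h := gowersNorm_three_pow_eight_mul_le hf ζ fun h ξ => hζ h ξ (mem_univ ξ)
  have hS : (η ^ 8 / 2) ^ 2 * N * N ^ 2 ≤ ∑ h ∈ H, M h := by
    simpa using sq_half_mul_card_mul_le_sum_filter univ M (by positivity) (by positivity)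
      (fun h _ => pow_le_pow_left₀ (norm_nonneg _) (norm_fourierSum_le (norm_mulDeriv_le hf h) _) 2)
      hsum
  refine ⟨H, ζ, graphOn H ζ, rfl, ?_, fun h hh => ?_⟩
  · refine le_of_mul_le_mul_left ?_ (pow_pos hN 9)
    calc N ^ 9 * (2 ^ (-8 : ℤ) * η ^ 64 * N ^ 3) = ((η ^ 8 / 2) ^ 2 * N * N ^ 2) ^ 4 := by
          rw [zpow_neg, zpow_ofNat]; ring
      _ ≤ (∑ h ∈ H, M h) ^ 4 := by gcongr
      _ ≤ _ := pow_four_sum_sq_norm_fourierSum_mulDeriv_le_mul_ncard hf H ζ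
  · refine div_sqrt_two_le_norm_inv_natCast_mul Fintype.card_pos ?_
    rw [← pow_mul]
    exact (mem_filter.mp hh).2
end

section
/- Large trilinear form implies correlation with a linear phase: Let G be a finite additive (abelian) group, let B and B′ be nonempty subsets of G, let f : G → ℂ be any function, and let b₁, b₂ : G → ℂ satisfy |b₁(x)| ≤ 1 and |b₂(x)| ≤ 1 for all x. Then there exists ξ ∈ Ĝ such that |𝔼_{z∈B′} f(z) e(−ξ·z)| ≥ (|B| / |B + B′|) · |𝔼_{z∈B′, x∈B} f(z) b₁(x) b₂(z+x)|, where B + B′ := {x + z : x ∈ B, z ∈ B′}. -/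
/-!
Write `S = ∑_{z ∈ B', x ∈ B} f(z) b₁(x) b₂(z + x)` and `F(ψ) = ∑_{z ∈ B'} f(z) ψ(z)`. Since
`z + x` ranges over `C = B + B'`, Fourier inversion of `b₂` on `C` gives
`|G| · S = ∑_ψ c(ψ⁻¹) F(ψ) a(ψ)`, where `a` and `c` are the character sums of `b₁` on `B` and of
`b₂` on `C`. Pulling out `max_ψ |F(ψ)|` and using `|c| |a| ≤ (|c|² + |a|²) / 2` together with
Parseval (`∑_ψ |a(ψ)|² ≤ |G| |B|`, `∑_ψ |c(ψ)|² ≤ |G| |C|`) gives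
`|S| ≤ max_ψ |F(ψ)| · (|B| + |C|) / 2 ≤ max_ψ |F(ψ)| · |C|`. Finally every complex character of `G`
is `z ↦ e(-ξ·z)` for some `ξ ∈ Ĝ`.
-/

open Finset Pointwise

/-- The average `𝔼_{x ∈ B} f(x)` of `f : G → ℂ` over a subset `B` of a finite type `G`. -/
noncomputable def expectC {G : Type*} [Fintype G] (B : Set G) (f : G → ℂ) : ℂ :=
  (B.ncard : ℂ)⁻¹ * ∑ x ∈ B.toFinite.toFinset, f x

lemma AddChar.exists_addMonoidHom_ee_neg_eq {G : Type*} [AddCommGroup G] [Finite G]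
    (ψ : AddChar G ℂ) : ∃ ξ : G →+ AddCircle (1 : ℝ), ∀ z, ee (-ξ z) = ψ z := by
  let e := AddCircle.homeomorphCircle (one_ne_zero (α := ℝ))
  have he : ∀ c, AddCircle.toCircle (e.symm c) = c := fun c => by
    rw [← AddCircle.homeomorphCircle_apply one_ne_zero, e.apply_symm_apply]
  let φ := circleEquivComplex.symm ψ
  let ξ : G →+ AddCircle (1 : ℝ) :=
    { toFun := fun z => e.symm (φ (-z))
      map_zero' := AddCircle.injective_toCircle one_ne_zero <| by simp [he]
      map_add' := fun a b => AddCircle.injective_toCircle one_ne_zero <| by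
        simp [he, AddCircle.toCircle_add, AddChar.map_add_eq_mul, mul_comm] }
  refine ⟨ξ, fun z => ?_⟩
  show ((AddCircle.toCircle (-e.symm (φ (-z))) : Circle) : ℂ) = ψ z
  rw [AddCircle.toCircle_neg, he, ← AddChar.map_neg_eq_inv, neg_neg]
  rfl

lemma Set.ncard_le_ncard_add_right {G : Type*} [AddCommGroup G] {B B' : Set G} (hB' : B'.Nonempty)
    (hB : (B + B').Finite) : B.ncard ≤ (B + B').ncard := by
  obtain ⟨z, hz⟩ := hB'
  calc B.ncard = (B + {z}).ncard := by
        rw [Set.add_singleton, Set.ncard_image_of_injective _ (add_left_injective z)]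
    _ ≤ (B + B').ncard := Set.ncard_le_ncard (Set.add_subset_add_left (by simpa)) hB

section Fourier

variable {G : Type*} [AddCommGroup G] [Fintype G] [DecidableEq G]

lemma sum_addChar_apply_mul_inv_apply (a b : G) :
    ∑ ψ : AddChar G ℂ, ψ a * ψ⁻¹ b = if a = b then (Fintype.card G : ℂ) else 0 := by
  simp_rw [AddChar.inv_apply, ← AddChar.map_add_eq_mul, ← sub_eq_add_neg,
    AddChar.sum_apply_eq_ite, sub_eq_zero]

lemma sum_addChar_sum_mul_inv_apply_mul_apply (T : Finset G) (g : G → ℂ) {y : G} (hy : y ∈ T) :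
    ∑ ψ : AddChar G ℂ, (∑ w ∈ T, g w * ψ⁻¹ w) * ψ y = Fintype.card G * g y := by
  calc ∑ ψ : AddChar G ℂ, (∑ w ∈ T, g w * ψ⁻¹ w) * ψ y
      = ∑ w ∈ T, g w * ∑ ψ : AddChar G ℂ, ψ y * ψ⁻¹ w := by
        simp_rw [sum_mul, mul_sum]
        rw [sum_comm]
        exact sum_congr rfl fun w _ => sum_congr rfl fun ψ _ => by ring
    _ = Fintype.card G * g y := by
        simp_rw [sum_addChar_apply_mul_inv_apply, mul_ite, mul_zero, sum_ite_eq, if_pos hy, mul_comm]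

lemma sum_norm_sq_sum_mul_addChar (T : Finset G) (g : G → ℂ) :
    ∑ ψ : AddChar G ℂ, ‖∑ w ∈ T, g w * ψ w‖ ^ 2 = Fintype.card G * ∑ w ∈ T, ‖g w‖ ^ 2 := by
  apply Complex.ofReal_injective
  push_cast
  calc ∑ ψ : AddChar G ℂ, ((‖∑ w ∈ T, g w * ψ w‖ : ℂ)) ^ 2
      = ∑ w ∈ T, ∑ w' ∈ T, g w * (starRingEnd ℂ) (g w') * ∑ ψ : AddChar G ℂ, ψ w * ψ⁻¹ w' := by
        simp_rw [← Complex.mul_conj', map_sum, map_mul, ← AddChar.map_neg_eq_conj,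
          ← AddChar.inv_apply, sum_mul_sum, mul_sum]
        rw [sum_comm]
        refine sum_congr rfl fun w _ => ?_
        rw [sum_comm]
        exact sum_congr rfl fun w' _ => sum_congr rfl fun ψ _ => by ring
    _ = Fintype.card G * ∑ w ∈ T, ((‖g w‖ : ℂ)) ^ 2 := by
        simp_rw [sum_addChar_apply_mul_inv_apply, mul_ite, mul_zero, sum_ite_eq, mul_sum]
        refine sum_congr rfl fun w hw => ?_
        rw [if_pos hw, Complex.mul_conj']
        ring

lemma sum_norm_sq_sum_mul_addChar_le {T : Finset G} {g : G → ℂ} (hg : ∀ w ∈ T, ‖g w‖ ≤ 1) :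
    ∑ ψ : AddChar G ℂ, ‖∑ w ∈ T, g w * ψ w‖ ^ 2 ≤ Fintype.card G * #T := by
  rw [sum_norm_sq_sum_mul_addChar]
  gcongr
  calc ∑ w ∈ T, ‖g w‖ ^ 2 ≤ ∑ _w ∈ T, (1 : ℝ) :=
        sum_le_sum fun w hw => pow_le_one₀ (norm_nonneg _) (hg w hw)
    _ = #T := by simp

variable {B B' C : Finset G} (f b₁ b₂ : G → ℂ)

lemma mul_sum_sum_mul_apply_add_eq_sum_addChar (hC : ∀ z ∈ B', ∀ x ∈ B, z + x ∈ C) :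
    Fintype.card G * ∑ z ∈ B', ∑ x ∈ B, f z * b₁ x * b₂ (z + x) =
      ∑ ψ : AddChar G ℂ, (∑ w ∈ C, b₂ w * ψ⁻¹ w) *
        ((∑ z ∈ B', f z * ψ z) * ∑ x ∈ B, b₁ x * ψ x) := by
  calc Fintype.card G * ∑ z ∈ B', ∑ x ∈ B, f z * b₁ x * b₂ (z + x)
      = ∑ z ∈ B', ∑ x ∈ B, f z * b₁ x *
          ∑ ψ : AddChar G ℂ, (∑ w ∈ C, b₂ w * ψ⁻¹ w) * ψ (z + x) := by
        rw [mul_sum]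
        refine sum_congr rfl fun z hz => ?_
        rw [mul_sum]
        refine sum_congr rfl fun x hx => ?_
        rw [sum_addChar_sum_mul_inv_apply_mul_apply C b₂ (hC z hz x hx)]
        ring
    _ = ∑ ψ : AddChar G ℂ, ∑ z ∈ B', ∑ x ∈ B,
          (∑ w ∈ C, b₂ w * ψ⁻¹ w) * ((f z * ψ z) * (b₁ x * ψ x)) := by
        simp_rw [AddChar.map_add_eq_mul, mul_sum]
        conv_rhs => rw [sum_comm]
        refine sum_congr rfl fun z _ => ?_
        conv_rhs => rw [sum_comm]
        exact sum_congr rfl fun x _ => sum_congr rfl fun ψ _ => by ring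
    _ = _ := sum_congr rfl fun ψ _ => by
        rw [sum_mul_sum, mul_sum]
        simp_rw [mul_sum]

lemma norm_sum_sum_mul_apply_add_le (hC : ∀ z ∈ B', ∀ x ∈ B, z + x ∈ C)
    (hb₁ : ∀ x ∈ B, ‖b₁ x‖ ≤ 1) (hb₂ : ∀ w ∈ C, ‖b₂ w‖ ≤ 1) {M : ℝ}
    (hM : ∀ ψ : AddChar G ℂ, ‖∑ z ∈ B', f z * ψ z‖ ≤ M) :
    ‖∑ z ∈ B', ∑ x ∈ B, f z * b₁ x * b₂ (z + x)‖ ≤ M * ((#B + #C) / 2) := by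
  set c : AddChar G ℂ → ℂ := fun ψ => ∑ w ∈ C, b₂ w * ψ w
  set a : AddChar G ℂ → ℂ := fun ψ => ∑ x ∈ B, b₁ x * ψ x
  have hM₀ : 0 ≤ M := (norm_nonneg _).trans (hM 1)
  have hc : ∑ ψ : AddChar G ℂ, ‖c ψ⁻¹‖ ^ 2 ≤ Fintype.card G * #C := by
    rw [Fintype.sum_equiv (Equiv.inv _) (fun ψ => ‖c ψ⁻¹‖ ^ 2) (fun ψ => ‖c ψ‖ ^ 2) fun _ => rfl]
    exact sum_norm_sq_sum_mul_addChar_le hb₂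
  have ha : ∑ ψ : AddChar G ℂ, ‖a ψ‖ ^ 2 ≤ Fintype.card G * #B :=
    sum_norm_sq_sum_mul_addChar_le hb₁
  have hN : (0 : ℝ) < Fintype.card G := by positivity
  refine le_of_mul_le_mul_left ?_ hN
  calc (Fintype.card G : ℝ) * ‖∑ z ∈ B', ∑ x ∈ B, f z * b₁ x * b₂ (z + x)‖
      = ‖∑ ψ : AddChar G ℂ, c ψ⁻¹ * ((∑ z ∈ B', f z * ψ z) * a ψ)‖ := by
        rw [← mul_sum_sum_mul_apply_add_eq_sum_addChar f b₁ b₂ hC, norm_mul, Complex.norm_natCast]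
    _ ≤ ∑ ψ : AddChar G ℂ, M * (‖c ψ⁻¹‖ ^ 2 + ‖a ψ‖ ^ 2) / 2 := by
        refine (norm_sum_le _ _).trans (sum_le_sum fun ψ _ => ?_)
        rw [norm_mul, norm_mul]
        nlinarith [hM ψ, sq_nonneg (‖c ψ⁻¹‖ - ‖a ψ‖), norm_nonneg (c ψ⁻¹), norm_nonneg (a ψ),
          norm_nonneg (∑ z ∈ B', f z * ψ z)]
    _ ≤ Fintype.card G * (M * ((#B + #C) / 2)) := by
        rw [← sum_div, ← mul_sum, sum_add_distrib]
        nlinarith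

end Fourier

lemma exists_addChar_norm_sum_sum_mul_apply_add_le {G : Type*} [AddCommGroup G] [Fintype G]
    {B B' : Set G} (hB' : B'.Nonempty) {f b₁ b₂ : G → ℂ}
    (hb₁ : ∀ x, ‖b₁ x‖ ≤ 1) (hb₂ : ∀ x, ‖b₂ x‖ ≤ 1) :
    ∃ ψ : AddChar G ℂ,
      ‖∑ z ∈ B'.toFinite.toFinset, ∑ x ∈ B.toFinite.toFinset, f z * b₁ x * b₂ (z + x)‖ ≤
        ‖∑ z ∈ B'.toFinite.toFinset, f z * ψ z‖ * (B + B').ncard := by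
  classical
  have hC : ∀ z ∈ B'.toFinite.toFinset, ∀ x ∈ B.toFinite.toFinset,
      z + x ∈ (B + B').toFinite.toFinset := by
    simp only [Set.Finite.mem_toFinset]
    exact fun z hz x hx => add_comm x z ▸ Set.add_mem_add hx hz
  obtain ⟨ψ, -, hψ⟩ := exists_max_image univ
    (fun ψ : AddChar G ℂ => ‖∑ z ∈ B'.toFinite.toFinset, f z * ψ z‖) univ_nonempty
  have hS := norm_sum_sum_mul_apply_add_le f b₁ b₂ hC (fun x _ => hb₁ x) (fun w _ => hb₂ w)
    fun φ => hψ φ (mem_univ φ)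
  rw [← Set.ncard_eq_toFinset_card B, ← Set.ncard_eq_toFinset_card (B + B')] at hS
  have hBC : (B.ncard : ℝ) ≤ (B + B').ncard :=
    mod_cast Set.ncard_le_ncard_add_right hB' (B + B').toFinite
  exact ⟨ψ, by nlinarith [norm_nonneg (∑ z ∈ B'.toFinite.toFinset, f z * ψ z)]⟩

/-- **Large trilinear form implies correlation with a linear phase**: for nonempty
`B, B' ⊆ G`, any `f : G → ℂ` and any `1`-bounded `b₁, b₂ : G → ℂ` there is a character
`ξ ∈ Ĝ` with
`|𝔼_{z ∈ B'} f(z) e(-ξ·z)| ≥ (|B|/|B+B'|) · |𝔼_{z ∈ B', x ∈ B} f(z) b₁(x) b₂(z+x)|`. -/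
theorem trilinear_implies_linear_correlation {G : Type*} [AddCommGroup G] [Fintype G]
    (B B' : Set G) (hB : B.Nonempty) (hB' : B'.Nonempty)
    (f b₁ b₂ : G → ℂ)
    (hb₁ : ∀ x, ‖b₁ x‖ ≤ 1) (hb₂ : ∀ x, ‖b₂ x‖ ≤ 1) :
    ∃ ξ : G →+ AddCircle (1 : ℝ),
      ((B.ncard : ℝ) / ((B + B').ncard : ℝ)) *
          ‖(B'.ncard : ℂ)⁻¹ * (B.ncard : ℂ)⁻¹ *
            ∑ z ∈ B'.toFinite.toFinset, ∑ x ∈ B.toFinite.toFinset,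
              f z * b₁ x * b₂ (z + x)‖ ≤
        ‖expectC B' (fun z => f z * ee (-(ξ z)))‖ := by
  obtain ⟨ψ, hψ⟩ := exists_addChar_norm_sum_sum_mul_apply_add_le (B := B) (f := f) hB' hb₁ hb₂
  obtain ⟨ξ, hξ⟩ := ψ.exists_addMonoidHom_ee_neg_eq
  refine ⟨ξ, ?_⟩
  have hB₀ : (B.ncard : ℝ) ≠ 0 := mod_cast ((Set.ncard_pos B.toFinite).2 hB).ne'
  simp only [expectC, hξ, norm_mul, norm_inv, Complex.norm_natCast]
  calc _ = (B'.ncard : ℝ)⁻¹ * (B.ncard / B.ncard) *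
        (‖∑ z ∈ B'.toFinite.toFinset, ∑ x ∈ B.toFinite.toFinset, f z * b₁ x * b₂ (z + x)‖ /
          (B + B').ncard) := by ring
    _ ≤ _ := by
      rw [div_self hB₀, mul_one]
      gcongr
      exact div_le_of_le_mul₀ (by positivity) (norm_nonneg _) hψ
end

section
/- Gauss sum lemma: Let F be a finite field of odd characteristic, let W be a finite-dimensional vector space over F with dim W ≥ 3, and let M : W → Ŵ be a self-adjoint homomorphism, i.e. an additive homomorphism from W to its dual group Ŵ satisfying Mx·y = My·x for all x, y ∈ W. Then there exists a nonzero x ∈ W with Mx·x = 0. -/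
/-!
Every value `M x y` is killed by `p = char F`, so it lies in the `p`-torsion of `ℝ/ℤ`, the
image of `ZMod.toAddCircle : ZMod p → ℝ/ℤ`. Thus `M` is a `ZMod p`-bilinear form `B` on `W`, and
`dim_{𝔽_p} W ≥ dim_F W ≥ 3`. In coordinates `x ↦ B x x` is a quadratic polynomial in at least
three variables, so by Chevalley–Warning `p` divides its number of zeros; since `0` is a zero,
there is another one.
-/

open MvPolynomial Module

noncomputable def Matrix.quadraticPolynomial {R σ : Type*} [CommSemiring R] [Fintype σ]
    (A : Matrix σ σ R) : MvPolynomial σ R :=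
  ∑ i, ∑ j, C (A i j) * X i * X j

namespace Matrix

variable {R σ : Type*} [CommSemiring R] [Fintype σ] (A : Matrix σ σ R)

@[simp]
theorem eval_quadraticPolynomial (x : σ → R) :
    eval x A.quadraticPolynomial = ∑ i, ∑ j, A i j * x i * x j := by
  simp [quadraticPolynomial]

theorem isHomogeneous_quadraticPolynomial : A.quadraticPolynomial.IsHomogeneous 2 :=
  IsHomogeneous.sum _ _ _ fun i _ => IsHomogeneous.sum _ _ _ fun j _ =>
    ((isHomogeneous_C _ _).mul (isHomogeneous_X _ i)).mul (isHomogeneous_X _ j)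

end Matrix

theorem MvPolynomial.exists_ne_zero_eval_eq_zero {K σ : Type*} [Field K] [Fintype K] [Fintype σ]
    {f : MvPolynomial σ K} (hf : f.totalDegree < Fintype.card σ) (h0 : eval 0 f = 0) :
    ∃ x ≠ 0, eval x f = 0 := by
  classical
  obtain ⟨p, _⟩ := CharP.exists K
  have hp_two := (CharP.char_is_prime K p).two_le
  have hpos : 0 < Fintype.card { x // eval x f = 0 } := Fintype.card_pos_iff.mpr ⟨⟨0, h0⟩⟩
  have hp_le : p ≤ Fintype.card { x // eval x f = 0 } :=
    Nat.le_of_dvd hpos (char_dvd_card_solutions p hf)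
  obtain ⟨⟨x, hx⟩, hne⟩ := Fintype.exists_ne_of_one_lt_card (by omega)
    (⟨0, h0⟩ : { x // eval x f = 0 })
  exact ⟨x, fun h => hne (Subtype.ext h), hx⟩

theorem LinearMap.exists_ne_zero_apply_self_eq_zero {K V : Type*} [Field K] [Fintype K]
    [AddCommGroup V] [Module K V] [FiniteDimensional K V] (B : V →ₗ[K] V →ₗ[K] K)
    (hV : 3 ≤ finrank K V) : ∃ v ≠ 0, B v v = 0 := by
  let b := finBasis K V
  let f := (toMatrix₂ b b B).quadraticPolynomial
  have hf : ∀ v, eval (b.equivFun v) f = B v v := fun v => by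
    conv_rhs => rw [← Matrix.toLinearMap₂_toMatrix₂ b b B]
    simp [f, Matrix.toLinearMap₂_apply, mul_comm, mul_left_comm]
  have hdeg : f.totalDegree < Fintype.card (Fin (finrank K V)) := by
    rw [Fintype.card_fin]
    exact (Matrix.isHomogeneous_quadraticPolynomial _).totalDegree_le.trans_lt hV
  have h0 : eval 0 f = 0 := by simpa using hf 0
  obtain ⟨c, hc, hfc⟩ := exists_ne_zero_eval_eq_zero hdeg h0
  refine ⟨b.equivFun.symm c, b.equivFun.symm.map_ne_zero_iff.mpr hc, ?_⟩
  rw [← hf, LinearEquiv.apply_symm_apply, hfc]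

theorem AddMonoidHom.exists_ne_zero_apply_self_eq_zero {p : ℕ} [Fact p.Prime] {V : Type*}
    [AddCommGroup V] [Module (ZMod p) V] [FiniteDimensional (ZMod p) V]
    (B : V →+ V →+ ZMod p) (hV : 3 ≤ finrank (ZMod p) V) : ∃ v ≠ 0, B v v = 0 :=
  (LinearMap.mk₂ (ZMod p) (fun x y => B x y) (by simp) (by simp [ZMod.map_smul]) (by simp)
    (by simp [ZMod.map_smul])).exists_ne_zero_apply_self_eq_zero hV

theorem ZMod.exists_toAddCircle_eq_of_nsmul_eq_zero {N : ℕ} [NeZero N] {u : UnitAddCircle}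
    (hu : N • u = 0) : ∃ j : ZMod N, toAddCircle j = u := by
  obtain ⟨m, -, rfl⟩ := (AddCircle.nsmul_eq_zero_iff (NeZero.pos N)).mp hu
  exact ⟨m, by rw [toAddCircle_natCast, mul_one]⟩

theorem AddMonoidHom.exists_toAddCircle_comp₂ {N : ℕ} [NeZero N] {W : Type*} [AddCommGroup W]
    (hW : ∀ x : W, N • x = 0) (M : W →+ W →+ UnitAddCircle) :
    ∃ B : W →+ W →+ ZMod N, ∀ x y, ZMod.toAddCircle (B x y) = M x y := by
  choose B hB using fun x y => ZMod.exists_toAddCircle_eq_of_nsmul_eq_zero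
    (show N • M x y = 0 by rw [← map_nsmul, hW, map_zero])
  refine ⟨mk' (fun x => mk' (B x) fun y y' => ?_) fun x x' => ?_, hB⟩
  · apply ZMod.toAddCircle_injective N
    simp [hB]
  · ext y
    apply ZMod.toAddCircle_injective N
    simp [hB]

theorem Module.finrank_le_finrank_zmod (p : ℕ) [Fact p.Prime] {F W : Type*} [Field F]
    [CharP F p] [AddCommGroup W] [Module F W] [Module (ZMod p) W] [Module.Finite (ZMod p) W] :
    finrank F W ≤ finrank (ZMod p) W := by
  let := ZMod.algebra F p
  have : IsScalarTower (ZMod p) F W := ⟨fun c a w => by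
    obtain ⟨n, rfl⟩ := ZMod.natCast_zmod_surjective c
    simp [Nat.cast_smul_eq_nsmul, mul_smul]⟩
  exact finrank_top_le_finrank_of_isScalarTower (ZMod p) F W

theorem gauss_sum_lemma_general (F : Type*) [Field F] [Fintype F]
    (W : Type*) [AddCommGroup W] [Module F W] [FiniteDimensional F W]
    (hdim : 3 ≤ Module.finrank F W)
    (M : W →+ (W →+ AddCircle (1 : ℝ))) :
    ∃ x : W, x ≠ 0 ∧ M x x = 0 := by
  obtain ⟨p, _⟩ := CharP.exists F
  have : Fact p.Prime := ⟨CharP.char_is_prime F p⟩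
  have hW : ∀ x : W, p • x = 0 := fun x => by
    rw [← Nat.cast_smul_eq_nsmul F, CharP.cast_eq_zero, zero_smul]
  -- `have`, not `let`: all `ZMod p`-module structures agree, and unfolding this one stalls
  -- instance search
  have : Module (ZMod p) W := AddCommGroup.zmodModule hW
  have : Finite W := Module.finite_of_finite F
  obtain ⟨B, hB⟩ := AddMonoidHom.exists_toAddCircle_comp₂ hW M
  have hrank : finrank F W ≤ finrank (ZMod p) W := finrank_le_finrank_zmod p
  obtain ⟨x, hx, hBx⟩ := B.exists_ne_zero_apply_self_eq_zero (hdim.trans hrank)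
  exact ⟨x, hx, by rw [← hB, hBx, map_zero]⟩

/-- **Gauss sum lemma**: let `F` be a finite field of odd characteristic, `W` a vector
space over `F` with `dim W ≥ 3`, and `M : W → Ŵ` a self-adjoint homomorphism into the dual
group `Ŵ` of homomorphisms `W → ℝ/ℤ` (i.e. `Mx·y = My·x` for all `x,y`). Then there is a
nonzero `x ∈ W` with `Mx·x = 0`. -/
theorem gauss_sum_lemma (F : Type*) [Field F] [Fintype F] (hchar : Odd (ringChar F))
    (W : Type*) [AddCommGroup W] [Module F W] [FiniteDimensional F W]
    (hdim : 3 ≤ Module.finrank F W)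
    (M : W →+ (W →+ AddCircle (1 : ℝ))) (hM : ∀ x y : W, M x y = M y x) :
    ∃ x : W, x ≠ 0 ∧ M x x = 0 :=
  gauss_sum_lemma_general F W hdim M
end
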